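/- arXiv:1909.00036 — 6 statements merged into one kernel-verified Lean document; each statement's English description precedes it below -/
import Mathlib

section
/- Conditional equivalence transformations of the subclass F_{III}: let r ≥ 2, α ≠ 0 real, a₂, …, a_r real with a_r ≠ 0, a₀₁, a₀₀, b₂ real, and let c₄, c₅ be nonzero reals and g a real constant. Let I ⊆ ℝ be an open interval and T smooth on I with c₄T′(t) > 0 for all t ∈ I, satisfying the ODE a₀₀ − T″/T′ = gT′ on I. If u solves u_t + u u_x = Σ_{j=2}^r a_j e^{αx} u_j + (a₀₁e^{αx} + a₀₀) u + b₂e^{2αx} − (a₀₀a₀₁/α)e^{αx} − a₀₀²/α on I × ℝ, then the function ũ defined by ũ(T(t), c₅x − (c₅/α)ln(c₄T′(t))) = (c₅/T′)(u(t,x) − T″/(αT′)) solves the equation of the same form with parameters α̃ = α/c₅, ã_j = c₄c₅^j a_j, ã₀₁ = c₄a₀₁, ã₀₀ = g, b̃₂ = c₄²c₅b₂, namely ũ_t + ũ ũ_x = Σ_{j=2}^r ã_j e^{α̃x̃} ũ_j + (ã₀₁e^{α̃x̃} + ã₀₀) ũ + b̃₂e^{2α̃x̃} − (ã₀₀ã₀₁/α̃)e^{α̃x̃}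 − ã₀₀²/α̃ on T(I) × ℝ. -/
open Real Set

open scoped ContDiff

/-- Partial derivative of `u` with respect to time. -/
noncomputable def pdt (u : ℝ → ℝ → ℝ) (t x : ℝ) : ℝ := deriv (fun s => u s x) t

/-- `j`-th partial derivative of `u` with respect to space. -/
noncomputable def pdx (u : ℝ → ℝ → ℝ) (j : ℕ) (t x : ℝ) : ℝ := iteratedDeriv j (u t) x

private lemma iter_aux (f : ℝ → ℝ) (hf : ContDiff ℝ ∞ f) (c k d : ℝ) (n : ℕ) (y : ℝ) :
    iteratedDeriv n (fun z => c * f (k * z + d)) y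
      = c * k ^ n * iteratedDeriv n f (k * y + d) := by
  have h2 : ContDiff ℝ (n : ℕ∞) (fun w => f (w + d)) :=
    (hf.of_le (by exact_mod_cast le_top)).comp (contDiff_id.add contDiff_const)
  have hg : ContDiff ℝ (n : ℕ∞) (fun z => f (k * z + d)) :=
    (hf.of_le (by exact_mod_cast le_top)).comp ((contDiff_id.const_smul k).add contDiff_const)
  have hc : iteratedDeriv n (fun z => c * f (k * z + d)) y
      = c * iteratedDeriv n (fun z => f (k * z + d)) y := by
    rw [← iteratedDerivWithin_univ, ← iteratedDerivWithin_univ]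
    exact iteratedDerivWithin_const_mul (mem_univ y) uniqueDiffOn_univ c (hg.contDiffWithinAt (s := univ) (x := y))
  rw [hc]
  have h3 : iteratedDeriv n (fun z => f (k * z + d)) y
      = k ^ n * iteratedDeriv n (fun w => f (w + d)) (k * y) := by
    have := iteratedDeriv_comp_const_mul (f := fun w => f (w + d)) h2 k
    exact congrFun this y
  rw [h3, iteratedDeriv_comp_add_const n f d]
  ring

private lemma iter_aux2 (f : ℝ → ℝ) (hf : ContDiff ℝ ∞ f) (c k d C : ℝ) (n : ℕ)
    (hn : 1 ≤ n) (y : ℝ) :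
    iteratedDeriv n (fun z => c * f (k * z + d) + C) y
      = c * k ^ n * iteratedDeriv n f (k * y + d) := by
  obtain ⟨m, rfl⟩ : ∃ m, n = m + 1 := ⟨n - 1, (Nat.succ_pred_eq_of_pos hn).symm⟩
  rw [iteratedDeriv_succ']
  have hf' : Differentiable ℝ f := hf.differentiable (by simp)
  have hd : deriv (fun z => c * f (k * z + d) + C) = fun z => c * k * deriv f (k * z + d) := by
    funext z
    rw [deriv_add_const]
    have hg : HasDerivAt (fun z : ℝ => k * z + d) k z := by
      simpa using ((hasDerivAt_id z).const_mul k).add_const d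
    have h1 : HasDerivAt (fun z : ℝ => f (k * z + d)) (deriv f (k * z + d) * k) z :=
      (hf' (k * z + d)).hasDerivAt.comp z hg
    rw [(h1.const_mul c).deriv]
    ring
  rw [hd]
  have hfd : ContDiff ℝ ∞ (deriv f) := (contDiff_infty_iff_deriv.mp hf).2
  rw [iter_aux (deriv f) hfd (c * k) k d m y, ← iteratedDeriv_succ']
  ring

set_option maxHeartbeats 1000000 in
theorem stmt14 (r : ℕ) (hr : 2 ≤ r)
    (α : ℝ) (hα : α ≠ 0)
    (a : ℕ → ℝ) (har : a r ≠ 0) (a01 a00 b2 : ℝ)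
    (c4 c5 g : ℝ) (hc4 : c4 ≠ 0) (hc5 : c5 ≠ 0)
    (I : Set ℝ) (hIo : IsOpen I) (hIc : I.OrdConnected)
    (T : ℝ → ℝ) (hT : ContDiffOn ℝ (⊤ : ℕ∞) T I)
    (hT' : ∀ t ∈ I, 0 < c4 * deriv T t)
    (hTode : ∀ t ∈ I, a00 - deriv (deriv T) t / deriv T t = g * deriv T t)
    (u : ℝ → ℝ → ℝ)
    (hu : ContDiffOn ℝ (⊤ : ℕ∞) (fun p : ℝ × ℝ => u p.1 p.2) (I ×ˢ (univ : Set ℝ)))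
    (hueq : ∀ t ∈ I, ∀ x : ℝ,
      pdt u t x + u t x * pdx u 1 t x
        = ∑ j ∈ Finset.Icc 2 r, a j * Real.exp (α * x) * pdx u j t x
          + (a01 * Real.exp (α * x) + a00) * u t x
          + b2 * Real.exp (2 * α * x)
          - a00 * a01 / α * Real.exp (α * x) - a00 ^ 2 / α)
    (ut : ℝ → ℝ → ℝ)
    (hut : ContDiffOn ℝ (⊤ : ℕ∞) (fun p : ℝ × ℝ => ut p.1 p.2) ((T '' I) ×ˢ (univ : Set ℝ)))
    (hutdef : ∀ t ∈ I, ∀ x : ℝ,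
      ut (T t) (c5 * x - c5 / α * Real.log (c4 * deriv T t))
        = c5 / deriv T t * (u t x - deriv (deriv T) t / (α * deriv T t))) :
    ∀ tt ∈ T '' I, ∀ xt : ℝ,
      pdt ut tt xt + ut tt xt * pdx ut 1 tt xt
        = ∑ j ∈ Finset.Icc 2 r,
            c4 * c5 ^ j * a j * Real.exp (α / c5 * xt) * pdx ut j tt xt
          + (c4 * a01 * Real.exp (α / c5 * xt) + g) * ut tt xt
          + c4 ^ 2 * c5 * b2 * Real.exp (2 * (α / c5) * xt)
          - g * (c4 * a01) / (α / c5) * Real.exp (α / c5 * xt)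
          - g ^ 2 / (α / c5) := by
  rintro tt ⟨t, htI, rfl⟩ xt
  -- nonvanishing of the derivative on I
  have hps : ∀ s ∈ I, deriv T s ≠ 0 := by
    intro s hs h0
    have := hT' s hs
    rw [h0, mul_zero] at this
    exact lt_irrefl 0 this
  -- names for the derivatives of T at t
  obtain ⟨P, hP⟩ : ∃ P, P = deriv T t := ⟨_, rfl⟩
  obtain ⟨Q, hQ⟩ : ∃ Q, Q = deriv (deriv T) t := ⟨_, rfl⟩
  obtain ⟨S, hS⟩ : ∃ S, S = deriv (deriv (deriv T)) t := ⟨_, rfl⟩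
  obtain ⟨x, hx⟩ : ∃ x, x = 1 / c5 * xt + 1 / α * Real.log (c4 * P) := ⟨_, rfl⟩
  have hc4P : 0 < c4 * P := by rw [hP]; exact hT' t htI
  have hP0 : P ≠ 0 := by rw [hP]; exact hps t htI
  -- smoothness of T and its derivatives
  have hT1 : ContDiffOn ℝ (⊤ : ℕ∞) (deriv T) I := hT.deriv_of_isOpen hIo (by simp)
  have hT2 : ContDiffOn ℝ (⊤ : ℕ∞) (deriv (deriv T)) I := hT1.deriv_of_isOpen hIo (by simp)
  have hTdP : HasDerivAt T P t := by
    rw [hP]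
    exact ((hT.contDiffAt (hIo.mem_nhds htI)).differentiableAt (by simp)).hasDerivAt
  have hTd1 : HasDerivAt (deriv T) Q t := by
    rw [hQ]
    exact ((hT1.contDiffAt (hIo.mem_nhds htI)).differentiableAt (by simp)).hasDerivAt
  have hTd2 : HasDerivAt (deriv (deriv T)) S t := by
    rw [hS]
    exact ((hT2.contDiffAt (hIo.mem_nhds htI)).differentiableAt (by simp)).hasDerivAt
  -- ODE consequences
  have hQval : Q = a00 * P - g * P ^ 2 := by
    have h := hTode t htI
    rw [← hP, ← hQ] at h
    field_simp at h
    linear_combination -h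
  have hEqOn : Set.EqOn (deriv (deriv T)) (fun s => a00 * deriv T s - g * (deriv T s) ^ 2) I := by
    intro s hs
    have h := hTode s hs
    have := hps s hs
    field_simp at h
    show deriv (deriv T) s = a00 * deriv T s - g * (deriv T s) ^ 2
    linear_combination -h
  have hSval : S = a00 * Q - 2 * g * P * Q := by
    have hRHS : HasDerivAt (fun s => a00 * deriv T s - g * (deriv T s) ^ 2)
        (a00 * Q - g * ((2 : ℕ) * deriv T t ^ (2 - 1) * Q)) t :=
      (hTd1.const_mul a00).sub ((hTd1.pow 2).const_mul g)
    have heq : deriv (deriv (deriv T)) t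
        = deriv (fun s => a00 * deriv T s - g * (deriv T s) ^ 2) t :=
      Filter.EventuallyEq.deriv_eq
        (Filter.eventuallyEq_of_mem (hIo.mem_nhds htI) hEqOn)
    rw [hS, heq, hRHS.deriv, ← hP]
    push_cast
    ring
  -- relation between xt and x
  have hxt : c5 * x - c5 / α * Real.log (c4 * P) = xt := by
    rw [hx]; field_simp; ring
  -- exp relations
  have hexp1 : Real.exp (α / c5 * xt) = Real.exp (α * x) / (c4 * P) := by
    have h1 : α / c5 * xt = α * x - Real.log (c4 * P) := by
      rw [← hxt]; field_simp
    rw [h1, Real.exp_sub, Real.exp_log hc4P]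
  have hexp2 : Real.exp (2 * (α / c5) * xt) = Real.exp (2 * α * x) / (c4 * P) ^ 2 := by
    have h1 : 2 * (α / c5) * xt = 2 * α * x - Real.log ((c4 * P) ^ 2) := by
      rw [Real.log_pow, ← hxt]; push_cast; field_simp
    rw [h1, Real.exp_sub, Real.exp_log (by positivity)]
  -- value of ut at (T t, xt)
  have hval : ut (T t) xt = c5 / P * (u t x - Q / (α * P)) := by
    have h := hutdef t htI x
    rw [← hP, ← hQ, hxt] at h
    exact h
  -- smoothness of u t
  have hut_smooth : ContDiff ℝ ∞ (u t) := by
    rw [contDiff_iff_contDiffAt]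
    intro y
    have h : ContDiffAt ℝ (⊤ : ℕ∞) (fun p : ℝ × ℝ => u p.1 p.2) (t, y) :=
      hu.contDiffAt ((hIo.prod isOpen_univ).mem_nhds (by simp [htI]))
    exact (h.of_le (by simp)).comp y (contDiffAt_const.prodMk contDiffAt_id)
  -- the time-t slice of ut as a function
  have hslice : ut (T t)
      = fun y => c5 / P * u t (1 / c5 * y + 1 / α * Real.log (c4 * P)) + -(c5 / P * (Q / (α * P))) := by
    funext y
    have h := hutdef t htI (1 / c5 * y + 1 / α * Real.log (c4 * P))
    rw [← hP, ← hQ] at h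
    have h2 : c5 * (1 / c5 * y + 1 / α * Real.log (c4 * P)) - c5 / α * Real.log (c4 * P) = y := by
      field_simp; ring
    rw [h2] at h
    rw [h]
    ring
  -- spatial derivatives of ut
  have hpdx : ∀ j : ℕ, 1 ≤ j →
      pdx ut j (T t) xt = c5 / P * (1 / c5) ^ j * pdx u j t x := by
    intro j hj
    unfold pdx
    rw [hslice, iter_aux2 (u t) hut_smooth (c5 / P) (1 / c5) (1 / α * Real.log (c4 * P))
      (-(c5 / P * (Q / (α * P)))) j hj xt, ← hx]
  -- the fderiv of u at (t, x)
  have hWd : HasFDerivAt (fun p : ℝ × ℝ => u p.1 p.2)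
      (fderiv ℝ (fun p : ℝ × ℝ => u p.1 p.2) (t, x)) (t, x) :=
    (((hu.contDiffAt ((hIo.prod isOpen_univ).mem_nhds (by simp [htI]))).differentiableAt
      (by simp))).hasFDerivAt
  have hDu10 : pdt u t x = fderiv ℝ (fun p : ℝ × ℝ => u p.1 p.2) (t, x) (1, 0) := by
    have h1 : HasDerivAt (fun s => u s x)
        (fderiv ℝ (fun p : ℝ × ℝ => u p.1 p.2) (t, x) (1, 0)) t := by
      have := hWd.comp_hasDerivAt t ((hasDerivAt_id t).prodMk (hasDerivAt_const t x))
      simpa [Function.comp_def] using this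
    unfold pdt
    exact h1.deriv
  have hDu01 : pdx u 1 t x = fderiv ℝ (fun p : ℝ × ℝ => u p.1 p.2) (t, x) (0, 1) := by
    have h1 : HasDerivAt (u t)
        (fderiv ℝ (fun p : ℝ × ℝ => u p.1 p.2) (t, x) (0, 1)) x := by
      have := hWd.comp_hasDerivAt x ((hasDerivAt_const x t).prodMk (hasDerivAt_id x))
      simpa [Function.comp_def] using this
    unfold pdx
    rw [iteratedDeriv_one]
    exact h1.deriv
  have hlin : fderiv ℝ (fun p : ℝ × ℝ => u p.1 p.2) (t, x) (1, Q / (α * P))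
      = fderiv ℝ (fun p : ℝ × ℝ => u p.1 p.2) (t, x) (1, 0)
        + Q / (α * P) * fderiv ℝ (fun p : ℝ × ℝ => u p.1 p.2) (t, x) (0, 1) := by
    have h : ((1 : ℝ), Q / (α * P)) = ((1 : ℝ), (0 : ℝ)) + (Q / (α * P)) • ((0 : ℝ), (1 : ℝ)) := by
      simp [Prod.ext_iff]
    rw [h, map_add, map_smul, smul_eq_mul]
  -- derivative of the moving spatial point
  have hXt' : 1 / c5 * xt + 1 / α * Real.log (c4 * deriv T t) = x := by
    rw [hx, hP]
  have hX' : HasDerivAt (fun s => 1 / c5 * xt + 1 / α * Real.log (c4 * deriv T s))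
      (Q / (α * P)) t := by
    have hmul : HasDerivAt (fun s => c4 * deriv T s) (c4 * Q) t := hTd1.const_mul c4
    have hlog : HasDerivAt (fun s => Real.log (c4 * deriv T s))
        (c4 * Q / (c4 * deriv T t)) t := hmul.log (by rw [← hP]; exact ne_of_gt hc4P)
    rw [← hP] at hlog
    have h : HasDerivAt (fun s => 1 / c5 * xt + 1 / α * Real.log (c4 * deriv T s))
        (0 + 1 / α * (c4 * Q / (c4 * P))) t :=
      (hasDerivAt_const t (1 / c5 * xt)).add (hlog.const_mul (1 / α))
    convert h using 1
    field_simp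
    ring
  -- derivative of s ↦ u s (X s)
  have hWd' : HasFDerivAt (fun p : ℝ × ℝ => u p.1 p.2)
      (fderiv ℝ (fun p : ℝ × ℝ => u p.1 p.2) (t, x))
      (t, 1 / c5 * xt + 1 / α * Real.log (c4 * deriv T t)) := by
    rw [hXt']; exact hWd
  have hB2 : HasDerivAt (fun s => u s (1 / c5 * xt + 1 / α * Real.log (c4 * deriv T s)))
      (pdt u t x + Q / (α * P) * pdx u 1 t x) t := by
    have h0 := hWd'.comp_hasDerivAt t ((hasDerivAt_id t).prodMk hX')
    rw [hlin, ← hDu10, ← hDu01] at h0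
    simpa [Function.comp_def] using h0
  -- openness of T '' I
  have hTIopen : IsOpen (T '' I) := by
    rw [isOpen_iff_mem_nhds]
    rintro _ ⟨s, hs, rfl⟩
    have hstrict : HasStrictDerivAt T (deriv T s) s :=
      (hT.contDiffAt (hIo.mem_nhds hs)).hasStrictDerivAt (by simp)
    rw [← hstrict.map_nhds_eq (hps s hs)]
    exact Filter.image_mem_map (hIo.mem_nhds hs)
  -- time derivative of ut
  have hmemT : ((T t, xt) : ℝ × ℝ) ∈ (T '' I) ×ˢ (univ : Set ℝ) := by
    exact ⟨⟨t, htI, rfl⟩, mem_univ _⟩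
  have hWtd : HasFDerivAt (fun p : ℝ × ℝ => ut p.1 p.2)
      (fderiv ℝ (fun p : ℝ × ℝ => ut p.1 p.2) (T t, xt)) (T t, xt) :=
    (((hut.contDiffAt ((hTIopen.prod isOpen_univ).mem_nhds hmemT)).differentiableAt
      (by simp))).hasFDerivAt
  have hΦ : HasDerivAt (fun s => ut s xt)
      (fderiv ℝ (fun p : ℝ × ℝ => ut p.1 p.2) (T t, xt) (1, 0)) (T t) := by
    have := hWtd.comp_hasDerivAt (T t) ((hasDerivAt_id (T t)).prodMk (hasDerivAt_const (T t) xt))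
    simpa [Function.comp_def] using this
  have hpdtut : pdt ut (T t) xt = fderiv ℝ (fun p : ℝ × ℝ => ut p.1 p.2) (T t, xt) (1, 0) := by
    unfold pdt
    exact hΦ.deriv
  have hF : HasDerivAt (fun s => ut (T s) xt)
      (fderiv ℝ (fun p : ℝ × ℝ => ut p.1 p.2) (T t, xt) (1, 0) * P) t := by
    have := hΦ.comp t hTdP
    simpa [Function.comp_def] using this
  -- the explicit formula for s ↦ ut (T s) xt on I
  have hFR : ∀ s ∈ I, ut (T s) xt
      = c5 * ((deriv T s)⁻¹ * u s (1 / c5 * xt + 1 / α * Real.log (c4 * deriv T s)))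
        - c5 / α * (deriv (deriv T) s * ((deriv T s) ^ 2)⁻¹) := by
    intro s hs
    have h := hutdef s hs (1 / c5 * xt + 1 / α * Real.log (c4 * deriv T s))
    have h2 : c5 * (1 / c5 * xt + 1 / α * Real.log (c4 * deriv T s))
        - c5 / α * Real.log (c4 * deriv T s) = xt := by field_simp; ring
    rw [h2] at h
    rw [h]
    have := hps s hs
    field_simp
  -- derivative of the explicit formula
  have h1 : HasDerivAt (fun s => (deriv T s)⁻¹) (-Q / P ^ 2) t := by
    have := hTd1.inv (by rw [← hP]; exact hP0)
    rwa [← hP] at this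
  have h2inv : HasDerivAt (fun s => ((deriv T s) ^ 2)⁻¹) (-(2 * P * Q) / (P ^ 2) ^ 2) t := by
    have h2a : HasDerivAt (fun s => (deriv T s) ^ 2) (2 * P * Q) t := by
      have : HasDerivAt (fun s => deriv T s ^ 2) ((2 : ℕ) * deriv T t ^ (2 - 1) * Q) t :=
        hTd1.pow 2
      rw [← hP] at this
      convert this using 1
      push_cast
      ring
    have := h2a.inv (by rw [← hP]; exact pow_ne_zero 2 hP0)
    rwa [← hP] at this
  have hRd := ((h1.mul hB2).const_mul c5).sub ((hTd2.mul h2inv).const_mul (c5 / α))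
  beta_reduce at hRd
  rw [hXt', ← hP, ← hQ] at hRd
  -- identify the two derivatives
  have hEv : (fun s => ut (T s) xt) =ᶠ[nhds t]
      (fun s => c5 * ((deriv T s)⁻¹ * u s (1 / c5 * xt + 1 / α * Real.log (c4 * deriv T s)))
        - c5 / α * (deriv (deriv T) s * ((deriv T s) ^ 2)⁻¹)) :=
    Filter.eventuallyEq_of_mem (hIo.mem_nhds htI) hFR
  have hF2 := hRd.congr_of_eventuallyEq hEv
  have hkey := hF.unique hF2
  have hpdt2 : pdt ut (T t) xt
      = (c5 * (-Q / P ^ 2 * u t x + P⁻¹ * (pdt u t x + Q / (α * P) * pdx u 1 t x))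
          - c5 / α * (S * ((P ^ 2)⁻¹) + Q * (-(2 * P * Q) / (P ^ 2) ^ 2))) / P := by
    rw [hpdtut, eq_div_iff hP0]
    exact hkey
  -- rewrite the sum
  have hsum : ∑ j ∈ Finset.Icc 2 r,
      c4 * c5 ^ j * a j * Real.exp (α / c5 * xt) * pdx ut j (T t) xt
      = c5 / P ^ 2 * ∑ j ∈ Finset.Icc 2 r, a j * Real.exp (α * x) * pdx u j t x := by
    rw [Finset.mul_sum]
    apply Finset.sum_congr rfl
    intro j hj
    have hj1 : 1 ≤ j := le_trans (by norm_num) (Finset.mem_Icc.mp hj).1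
    rw [hpdx j hj1, hexp1]
    have hpow : (c5 : ℝ) ^ j * (1 / c5) ^ j = 1 := by
      rw [← mul_pow]; field_simp; exact one_pow j
    calc c4 * c5 ^ j * a j * (Real.exp (α * x) / (c4 * P)) * (c5 / P * (1 / c5) ^ j * pdx u j t x)
        = (c5 ^ j * (1 / c5) ^ j)
            * (c4 * a j * (Real.exp (α * x) / (c4 * P)) * (c5 / P * pdx u j t x)) := by ring
      _ = c4 * a j * (Real.exp (α * x) / (c4 * P)) * (c5 / P * pdx u j t x) := by rw [hpow]; ring
      _ = c5 / P ^ 2 * (a j * Real.exp (α * x) * pdx u j t x) := by field_simp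
  -- the original PDE at (t, x)
  have huval := hueq t htI x
  have hux : pdt u t x = ∑ j ∈ Finset.Icc 2 r, a j * Real.exp (α * x) * pdx u j t x
      + (a01 * Real.exp (α * x) + a00) * u t x
      + b2 * Real.exp (2 * α * x)
      - a00 * a01 / α * Real.exp (α * x) - a00 ^ 2 / α - u t x * pdx u 1 t x := by
    linarith [huval]
  -- final assembly
  rw [hpdt2, hval, hpdx 1 (by norm_num), hsum, hexp1, hexp2, hux, hSval, hQval]
  field_simp
  simp only [mul_comm (Real.exp (α * x)) (a _)]
  ring
end

section
/- The generalized equivalence group of the subclass F_{IV,1} of constant-coefficient equations: let r ≥ 2, a₂, …, a_r real with a_r ≠ 0, a₀, b₁, b₀ real. Let T¹ ≠ 0, T⁰, X¹ ≠ 0 be real constants, let κ be a real constant, and let X⁰ : ℝ → ℝ be smooth with X⁰″(t) − a₀X⁰′(t) − b₁X⁰(t) = κ for all t. If u solves u_t + u u_x = Σ_{j=2}^r a_j u_j + a₀u + b₁x + b₀ on ℝ², then the function ũ defined by ũ(T¹t + T⁰, X¹x + X⁰(t)) = (X¹/T¹)u(t,x) + X⁰′(t)/T¹ solves ũ_t +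 ũ ũ_x = Σ_{j=2}^r ((X¹)^j a_j/T¹) ũ_j + (a₀/T¹) ũ + (b₁/(T¹)²) x̃ + (X¹b₀ + κ)/(T¹)² on ℝ². -/
open Real Set

lemma iteratedDeriv_cmul {n : ℕ} {f : ℝ → ℝ} (hf : ContDiff ℝ n f) (c : ℝ) (x : ℝ) :
    iteratedDeriv n (fun z => c * f z) x = c * iteratedDeriv n f x := by
  simp only [← iteratedDerivWithin_univ]
  exact iteratedDerivWithin_const_mul (mem_univ x) uniqueDiffOn_univ c hf.contDiffWithinAt

lemma iteratedDeriv_cmul_addconst {k : ℕ} {f : ℝ → ℝ} (hf : ContDiff ℝ (⊤ : ℕ∞) f) (c B x : ℝ) :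
    iteratedDeriv (k + 1) (fun z => c * f z + B) x = c * iteratedDeriv (k + 1) f x := by
  rw [iteratedDeriv_succ', iteratedDeriv_succ']
  have hd : deriv (fun z => c * f z + B) = fun z => c * deriv f z := by
    funext z
    rw [deriv_add_const, deriv_const_mul _ ((hf.differentiable (by simp)) z)]
  rw [hd]
  have hdf : ContDiff ℝ k (deriv f) :=
    ((contDiff_infty_iff_deriv.mp (hf.of_le (by simp))).2).of_le (by exact_mod_cast le_top)
  rw [iteratedDeriv_cmul hdf c x]

lemma iteratedDeriv_affine (n : ℕ) (g : ℝ → ℝ) (hg : ContDiff ℝ (⊤ : ℕ∞) g) (c d x : ℝ) :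
    iteratedDeriv n (fun z => g (c * z + d)) x = c ^ n * iteratedDeriv n g (c * x + d) := by
  have h2 : ContDiff ℝ n (fun w => g (w + d)) :=
    (hg.of_le (by exact_mod_cast le_top)).comp (contDiff_id.add contDiff_const)
  have h3 := iteratedDeriv_comp_const_mul h2 c
  have h4 := iteratedDeriv_comp_add_const n g d
  calc iteratedDeriv n (fun z => g (c * z + d)) x
      = iteratedDeriv n (fun z => (fun w => g (w + d)) (c * z)) x := rfl
    _ = c ^ n * iteratedDeriv n (fun w => g (w + d)) (c * x) := congrFun h3 x
    _ = c ^ n * iteratedDeriv n g (c * x + d) := by rw [h4]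

lemma hasDerivAt_pdt (u : ℝ → ℝ → ℝ) (hu : ContDiff ℝ (⊤ : ℕ∞) (fun p : ℝ × ℝ => u p.1 p.2))
    (t x : ℝ) :
    HasDerivAt (fun s => u s x)
      ((fderiv ℝ (fun p : ℝ × ℝ => u p.1 p.2) (t, x)) (1, 0)) t := by
  have hF := (hu.differentiable (by simp) (t, x)).hasFDerivAt
  have hγ : HasDerivAt (fun s : ℝ => (s, x)) ((1 : ℝ), (0 : ℝ)) t :=
    (hasDerivAt_id t).prodMk (hasDerivAt_const t x)
  exact hF.comp_hasDerivAt t hγ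

lemma hasDerivAt_pdx (u : ℝ → ℝ → ℝ) (hu : ContDiff ℝ (⊤ : ℕ∞) (fun p : ℝ × ℝ => u p.1 p.2))
    (t x : ℝ) :
    HasDerivAt (fun y => u t y)
      ((fderiv ℝ (fun p : ℝ × ℝ => u p.1 p.2) (t, x)) (0, 1)) x := by
  have hF := (hu.differentiable (by simp) (t, x)).hasFDerivAt
  have hγ : HasDerivAt (fun y : ℝ => (t, y)) ((0 : ℝ), (1 : ℝ)) x :=
    (hasDerivAt_const x t).prodMk (hasDerivAt_id x)
  exact hF.comp_hasDerivAt x hγ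

lemma hasDerivAt_uncurry (u : ℝ → ℝ → ℝ) (hu : ContDiff ℝ (⊤ : ℕ∞) (fun p : ℝ × ℝ => u p.1 p.2))
    {γ1 γ2 : ℝ → ℝ} {d1 d2 t : ℝ} (h1 : HasDerivAt γ1 d1 t) (h2 : HasDerivAt γ2 d2 t) :
    HasDerivAt (fun s => u (γ1 s) (γ2 s))
      (d1 * pdt u (γ1 t) (γ2 t) + d2 * pdx u 1 (γ1 t) (γ2 t)) t := by
  have hF := (hu.differentiable (by simp) (γ1 t, γ2 t)).hasFDerivAt
  have hγ : HasDerivAt (fun s => (γ1 s, γ2 s)) (d1, d2) t := h1.prodMk h2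
  have key := hF.comp_hasDerivAt t hγ
  have hpt : pdt u (γ1 t) (γ2 t)
      = (fderiv ℝ (fun p : ℝ × ℝ => u p.1 p.2) (γ1 t, γ2 t)) (1, 0) :=
    (hasDerivAt_pdt u hu _ _).deriv
  have hpx : pdx u 1 (γ1 t) (γ2 t)
      = (fderiv ℝ (fun p : ℝ × ℝ => u p.1 p.2) (γ1 t, γ2 t)) (0, 1) := by
    rw [pdx, iteratedDeriv_one]
    exact (hasDerivAt_pdx u hu _ _).deriv
  have hlin : (fderiv ℝ (fun p : ℝ × ℝ => u p.1 p.2) (γ1 t, γ2 t)) (d1, d2)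
      = d1 * (fderiv ℝ (fun p : ℝ × ℝ => u p.1 p.2) (γ1 t, γ2 t)) (1, 0)
        + d2 * (fderiv ℝ (fun p : ℝ × ℝ => u p.1 p.2) (γ1 t, γ2 t)) (0, 1) := by
    have hv : (d1, d2) = d1 • ((1 : ℝ), (0 : ℝ)) + d2 • ((0 : ℝ), (1 : ℝ)) := by
      simp [Prod.ext_iff]
    rw [hv, map_add, map_smul, map_smul, smul_eq_mul, smul_eq_mul]
  rw [hpt, hpx, ← hlin]
  exact key

theorem stmt15 (r : ℕ) (hr : 2 ≤ r)
    (a : ℕ → ℝ) (har : a r ≠ 0) (a0 b1 b0 : ℝ)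
    (T1 T0 X1 κ : ℝ) (hT1 : T1 ≠ 0) (hX1 : X1 ≠ 0)
    (X0 : ℝ → ℝ) (hX0 : ContDiff ℝ (⊤ : ℕ∞) X0)
    (hX0ode : ∀ t : ℝ,
      deriv (deriv X0) t - a0 * deriv X0 t - b1 * X0 t = κ)
    (u : ℝ → ℝ → ℝ) (hu : ContDiff ℝ (⊤ : ℕ∞) (fun p : ℝ × ℝ => u p.1 p.2))
    (hueq : ∀ t x : ℝ,
      pdt u t x + u t x * pdx u 1 t x
        = ∑ j ∈ Finset.Icc 2 r, a j * pdx u j t x + a0 * u t x + b1 * x + b0)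
    (ut : ℝ → ℝ → ℝ) (hut : ContDiff ℝ (⊤ : ℕ∞) (fun p : ℝ × ℝ => ut p.1 p.2))
    (hutdef : ∀ t x : ℝ,
      ut (T1 * t + T0) (X1 * x + X0 t)
        = X1 / T1 * u t x + deriv X0 t / T1) :
    ∀ tt xt : ℝ,
      pdt ut tt xt + ut tt xt * pdx ut 1 tt xt
        = ∑ j ∈ Finset.Icc 2 r, X1 ^ j * a j / T1 * pdx ut j tt xt
          + a0 / T1 * ut tt xt + b1 / T1 ^ 2 * xt
          + (X1 * b0 + κ) / T1 ^ 2 := by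
  intro tt xt
  set t := (tt - T0) / T1 with ht
  set x := (xt - X0 t) / X1 with hx
  have htt : T1 * t + T0 = tt := by rw [ht]; field_simp; ring
  have hxx : X1 * x + X0 t = xt := by rw [hx]; field_simp; ring
  have hutfun : ContDiff ℝ (⊤ : ℕ∞) (ut tt) :=
    hut.comp (contDiff_const.prodMk contDiff_id)
  have hufun : ContDiff ℝ (⊤ : ℕ∞) (u t) :=
    hu.comp (contDiff_const.prodMk contDiff_id)
  -- spatial derivatives
  have hspace : ∀ j : ℕ, 1 ≤ j → X1 ^ j * pdx ut j tt xt = X1 / T1 * pdx u j t x := by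
    intro j hj
    obtain ⟨k, rfl⟩ : ∃ k, j = k + 1 := ⟨j - 1, (Nat.succ_pred_eq_of_pos hj).symm⟩
    have hfun : (fun x' => ut tt (X1 * x' + X0 t))
        = fun x' => X1 / T1 * u t x' + deriv X0 t / T1 := by
      funext x'
      rw [← htt]
      exact hutdef t x'
    have e1 : iteratedDeriv (k + 1) (fun x' => ut tt (X1 * x' + X0 t)) x
        = X1 ^ (k + 1) * pdx ut (k + 1) tt xt := by
      rw [iteratedDeriv_affine (k + 1) (ut tt) hutfun X1 (X0 t) x, hxx]
      rfl
    have e2 : iteratedDeriv (k + 1) (fun x' => ut tt (X1 * x' + X0 t)) x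
        = iteratedDeriv (k + 1) (fun x' => X1 / T1 * u t x' + deriv X0 t / T1) x := by
      rw [hfun]
    have e3 := iteratedDeriv_cmul_addconst (k := k) (f := u t) hufun (X1 / T1)
      (deriv X0 t / T1) x
    exact e1.symm.trans (e2.trans e3)
  -- temporal derivative
  have hxc : ∀ s : ℝ, X1 * ((xt - X0 s) / X1) + X0 s = xt := by
    intro s; field_simp; ring
  have hcurve : ∀ s : ℝ, ut (T1 * s + T0) xt
      = X1 / T1 * u s ((xt - X0 s) / X1) + deriv X0 s / T1 := by
    intro s
    have h := hutdef s ((xt - X0 s) / X1)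
    rwa [hxc s] at h
  have hq : HasDerivAt (fun s => u s ((xt - X0 s) / X1))
      (1 * pdt u t x + (-(deriv X0 t) / X1) * pdx u 1 t x) t := by
    have hγ2 : HasDerivAt (fun s => (xt - X0 s) / X1) (-(deriv X0 t) / X1) t :=
      ((hX0.differentiable (by simp) t).hasDerivAt.const_sub xt).div_const X1
    have h := hasDerivAt_uncurry u hu (hasDerivAt_id t) hγ2
    simpa [← hx] using h
  have hX0' : Differentiable ℝ (deriv X0) :=
    ((contDiff_infty_iff_deriv.mp (hX0.of_le (by simp))).2).differentiable
      (by simp)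
  have hR : HasDerivAt (fun s => X1 / T1 * u s ((xt - X0 s) / X1) + deriv X0 s / T1)
      (X1 / T1 * (1 * pdt u t x + (-(deriv X0 t) / X1) * pdx u 1 t x)
        + deriv (deriv X0) t / T1) t :=
    (hq.const_mul (X1 / T1)).add ((hX0' t).hasDerivAt.div_const T1)
  have hLd : HasDerivAt (fun s => ut (T1 * s + T0) xt) (pdt ut tt xt * T1) t := by
    have hp : HasDerivAt (fun s => ut s xt) (pdt ut tt xt) tt :=
      (hasDerivAt_pdt ut hut tt xt).differentiableAt.hasDerivAt
    have haff : HasDerivAt (fun s => T1 * s + T0) T1 t := by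
      simpa using ((hasDerivAt_id t).const_mul T1).add_const T0
    have hp' : HasDerivAt (fun s => ut s xt) (pdt ut tt xt) (T1 * t + T0) := htt ▸ hp
    exact hp'.comp t haff
  have hfun2 : (fun s => ut (T1 * s + T0) xt)
      = fun s => X1 / T1 * u s ((xt - X0 s) / X1) + deriv X0 s / T1 := funext hcurve
  have hkey : pdt ut tt xt * T1
      = X1 / T1 * (1 * pdt u t x + (-(deriv X0 t) / X1) * pdx u 1 t x)
        + deriv (deriv X0) t / T1 := (hfun2 ▸ hLd).unique hR
  have hval_eq : X1 / T1 * (1 * pdt u t x + (-(deriv X0 t) / X1) * pdx u 1 t x)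
        + deriv (deriv X0) t / T1
      = (X1 * pdt u t x - deriv X0 t * pdx u 1 t x + deriv (deriv X0) t) / T1 := by
    field_simp
    ring
  have hkey2 : pdt ut tt xt * T1 ^ 2
      = X1 * pdt u t x - deriv X0 t * pdx u 1 t x + deriv (deriv X0) t := by
    rw [sq, ← mul_assoc, hkey, hval_eq, div_mul_cancel₀ _ hT1]
  have hval2 : ut tt xt * T1 = X1 * u t x + deriv X0 t := by
    have h : ut tt xt = X1 / T1 * u t x + deriv X0 t / T1 := by
      rw [← htt, ← hxx]; exact hutdef t x
    rw [h]; field_simp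
  have hQ2 : pdx ut 1 tt xt * T1 = pdx u 1 t x := by
    have h := hspace 1 le_rfl
    rw [pow_one] at h
    have h2 : pdx ut 1 tt xt = pdx u 1 t x / T1 :=
      mul_left_cancel₀ hX1 (h.trans (by ring))
    rw [h2, div_mul_cancel₀ _ hT1]
  have hsum : ∑ j ∈ Finset.Icc 2 r, X1 ^ j * a j / T1 * pdx ut j tt xt
      = X1 / T1 ^ 2 * ∑ j ∈ Finset.Icc 2 r, a j * pdx u j t x := by
    rw [Finset.mul_sum]
    apply Finset.sum_congr rfl
    intro j hj
    have hj1 : 1 ≤ j := le_trans one_le_two (Finset.mem_Icc.mp hj).1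
    linear_combination (a j / T1) * hspace j hj1
  have hode' : deriv (deriv X0) t = a0 * deriv X0 t + b1 * X0 t + κ := by
    linarith [hX0ode t]
  have hP : pdt ut tt xt
      = (X1 * pdt u t x - deriv X0 t * pdx u 1 t x + deriv (deriv X0) t) / T1 ^ 2 := by
    rw [eq_div_iff (pow_ne_zero 2 hT1)]; exact hkey2
  have hQ : pdx ut 1 tt xt = pdx u 1 t x / T1 := by
    rw [eq_div_iff hT1]; exact hQ2
  have hV : ut tt xt = (X1 * u t x + deriv X0 t) / T1 := by
    rw [eq_div_iff hT1]; exact hval2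
  have hS : ∑ j ∈ Finset.Icc 2 r, a j * pdx u j t x
      = pdt u t x + u t x * pdx u 1 t x - a0 * u t x - b1 * x - b0 := by
    linarith [hueq t x]
  have hxt : xt = X1 * x + X0 t := hxx.symm
  rw [hsum, hP, hQ, hV, hS, hode', hxt]
  field_simp
  ring
end

section
/- Conditional equivalence transformations of the subclass F_{IV,0} with r > 2: let r > 2 be an integer, a_r ≠ 0, a₀, b₀ real, c₄ ≠ 0, and let g, b̃₀ be real constants. Let I ⊆ ℝ be an open interval, T smooth on I with c₄T′(t) > 0 for all t ∈ I, and set X¹(t) = (c₄T′(t))^{1/r}. Suppose T satisfies a₀ − ((r−2)/r)·(T″/T′) = gT′ on I, and X⁰ is smooth on I satisfying (1/T′)·(X⁰′/T′)′ − g·(X⁰′/T′) − ((r−1)/(r−2)²)·g²·X⁰ = b̃₀ − b₀X¹/T′² on I. If u solves u_t + u u_x = a_r u_r + a₀u + ((r−1)/(r−2)²)a₀² x + b₀ on I × ℝ, then the transformed function ũ of u under (T, X¹, X⁰) solves ũ_t + ũ ũ_x = c₄a_r ũ_r + g ũ + ((r−1)/(r−2)²)g² x̃ + b̃₀ on T(I)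 × ℝ. -/
open Real Set

private lemma iter_const_zero (n : ℕ) (hn : 1 ≤ n) (a : ℝ) :
    iteratedDeriv n (fun _ : ℝ => a) = 0 := by
  induction n generalizing a with
  | zero => omega
  | succ m ih =>
    rw [iteratedDeriv_succ', deriv_const']
    rcases Nat.eq_zero_or_pos m with h | h
    · subst h; funext x; simp
    · exact ih h 0

private lemma iter_affine_zero {n : ℕ} (hn : 2 ≤ n) (a b : ℝ) :
    iteratedDeriv n (fun y : ℝ => a * y + b) = 0 := by
  obtain ⟨m, rfl⟩ : ∃ m, n = m + 2 := ⟨n - 2, by omega⟩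
  have h1 : deriv (fun y : ℝ => a * y + b) = fun _ => a := by
    funext y
    simpa using (((hasDerivAt_id y).const_mul a).add_const b).deriv
  rw [show m + 2 = (m + 1) + 1 by ring, iteratedDeriv_succ', h1,
    iter_const_zero (m+1) (by omega) a]

private lemma iter_comp_affine {f : ℝ → ℝ} (hf : ContDiff ℝ (⊤ : ℕ∞) f) {c : ℝ} (hc : c ≠ 0)
    (d : ℝ) (n : ℕ) (y : ℝ) :
    iteratedDeriv n (fun z => f ((z - d) / c)) y = (1 / c) ^ n * iteratedDeriv n f ((y - d) / c) := by
  have hg : ContDiff ℝ n (fun w : ℝ => f (w + (-d / c))) :=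
    (hf.of_le (WithTop.coe_le_coe.2 le_top)).comp (contDiff_id.add contDiff_const)
  have h1 : (fun z : ℝ => f ((z - d) / c))
      = fun z => (fun w : ℝ => f (w + (-d / c))) ((1 / c) * z) := by
    funext z
    congr 1
    field_simp
    ring
  rw [h1, iteratedDeriv_comp_const_mul hg (1 / c), iteratedDeriv_comp_add_const]
  show (1 / c) ^ n * iteratedDeriv n f (1 / c * y + -d / c)
      = (1 / c) ^ n * iteratedDeriv n f ((y - d) / c)
  rw [show 1 / c * y + -d / c = (y - d) / c from by field_simp; ring]

set_option maxHeartbeats 3000000 in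
theorem stmt16 (r : ℕ) (hr : 2 < r)
    (ar : ℝ) (har : ar ≠ 0) (a0 b0 : ℝ)
    (c4 g bt0 : ℝ) (hc4 : c4 ≠ 0)
    (I : Set ℝ) (hIo : IsOpen I) (hIc : I.OrdConnected)
    (T : ℝ → ℝ) (hT : ContDiffOn ℝ (⊤ : ℕ∞) T I)
    (hT' : ∀ t ∈ I, 0 < c4 * deriv T t)
    (X1 : ℝ → ℝ) (hX1def : ∀ t ∈ I, X1 t = (c4 * deriv T t) ^ (1 / (r : ℝ)))
    (hTode : ∀ t ∈ I,
      a0 - ((r : ℝ) - 2) / (r : ℝ) * (deriv (deriv T) t / deriv T t) = g * deriv T t)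
    (X0 : ℝ → ℝ) (hX0 : ContDiffOn ℝ (⊤ : ℕ∞) X0 I)
    (hX0ode : ∀ t ∈ I,
      (1 / deriv T t) * deriv (fun s => deriv X0 s / deriv T s) t
        - g * (deriv X0 t / deriv T t)
        - ((r : ℝ) - 1) / ((r : ℝ) - 2) ^ 2 * g ^ 2 * X0 t
        = bt0 - b0 * X1 t / (deriv T t) ^ 2)
    (u : ℝ → ℝ → ℝ)
    (hu : ContDiffOn ℝ (⊤ : ℕ∞) (fun p : ℝ × ℝ => u p.1 p.2) (I ×ˢ (univ : Set ℝ)))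
    (hueq : ∀ t ∈ I, ∀ x : ℝ,
      pdt u t x + u t x * pdx u 1 t x
        = ar * pdx u r t x + a0 * u t x
          + ((r : ℝ) - 1) / ((r : ℝ) - 2) ^ 2 * a0 ^ 2 * x + b0)
    (ut : ℝ → ℝ → ℝ)
    (hut : ContDiffOn ℝ (⊤ : ℕ∞) (fun p : ℝ × ℝ => ut p.1 p.2) ((T '' I) ×ˢ (univ : Set ℝ)))
    (hutdef : ∀ t ∈ I, ∀ x : ℝ,
      ut (T t) (X1 t * x + X0 t)
        = X1 t / deriv T t * u t x + deriv X1 t / deriv T t * x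
          + deriv X0 t / deriv T t) :
    ∀ tt ∈ T '' I, ∀ xt : ℝ,
      pdt ut tt xt + ut tt xt * pdx ut 1 tt xt
        = c4 * ar * pdx ut r tt xt + g * ut tt xt
          + ((r : ℝ) - 1) / ((r : ℝ) - 2) ^ 2 * g ^ 2 * xt + bt0 := by
  have hone : ((⊤ : ℕ∞) : WithTop ℕ∞) ≠ 0 :=
    by simp
  have hrR : (2 : ℝ) < (r : ℝ) := by exact_mod_cast hr
  have hrne : (r : ℝ) ≠ 0 := by positivity
  have hr2 : (r : ℝ) - 2 ≠ 0 := by linarith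
  have hτne : ∀ s ∈ I, deriv T s ≠ 0 := by
    intro s hs h
    have := hT' s hs
    rw [h, mul_zero] at this
    exact lt_irrefl 0 this
  have hX1pos : ∀ s ∈ I, 0 < X1 s := by
    intro s hs
    rw [hX1def s hs]
    exact Real.rpow_pos_of_pos (hT' s hs) _
  -- smoothness
  have hTs : ContDiffOn ℝ (⊤ : ℕ∞) T I := hT.of_le (by simp)
  have hX0s : ContDiffOn ℝ (⊤ : ℕ∞) X0 I := hX0.of_le (by simp)
  have hT1 : ContDiffOn ℝ (⊤ : ℕ∞) (deriv T) I :=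
    ((contDiffOn_infty_iff_deriv_of_isOpen hIo).1 hTs).2
  have hX01 : ContDiffOn ℝ (⊤ : ℕ∞) (deriv X0) I :=
    ((contDiffOn_infty_iff_deriv_of_isOpen hIo).1 hX0s).2
  have hda : ∀ (f : ℝ → ℝ), ContDiffOn ℝ (⊤ : ℕ∞) f I →
      ∀ s ∈ I, HasDerivAt f (deriv f s) s := by
    intro f hf s hs
    exact ((hf.differentiableOn hone).differentiableAt (hIo.mem_nhds hs)).hasDerivAt
  have hTd := hda T hTs
  have hTdd := hda (deriv T) hT1
  have hX0d := hda X0 hX0s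
  -- rewrite the T-ode
  have hTode' : ∀ s ∈ I, deriv (deriv T) s
      = (r : ℝ) / ((r : ℝ) - 2) * (a0 - g * deriv T s) * deriv T s := by
    intro s hs
    have h := hTode s hs
    have hτ := hτne s hs
    field_simp at h ⊢
    nlinarith [h]
  -- derivative of X1
  have hX1d : ∀ s ∈ I, HasDerivAt X1 (X1 s * (a0 - g * deriv T s) / ((r : ℝ) - 2)) s := by
    intro s hs
    have hpos := hT' s hs
    have hct : c4 * deriv T s ≠ 0 := ne_of_gt hpos
    have hev : X1 =ᶠ[nhds s] fun s' => (c4 * deriv T s') ^ (1 / (r : ℝ)) := by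
      filter_upwards [hIo.mem_nhds hs] with a ha using hX1def a ha
    have h1 : HasDerivAt (fun s' => c4 * deriv T s') (c4 * deriv (deriv T) s) s :=
      (hTdd s hs).const_mul c4
    have h2 := h1.rpow_const (p := 1 / (r : ℝ)) (Or.inl (ne_of_gt hpos))
    have h3 : c4 * deriv (deriv T) s * (1 / (r : ℝ)) * (c4 * deriv T s) ^ (1 / (r : ℝ) - 1)
        = X1 s * (a0 - g * deriv T s) / ((r : ℝ) - 2) := by
      rw [Real.rpow_sub hpos, Real.rpow_one, hTode' s hs, ← hX1def s hs]
      have hτ := hτne s hs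
      field_simp
    rw [h3] at h2
    exact h2.congr_of_eventuallyEq hev
  -- T '' I is open
  have hTopen : IsOpen (T '' I) := by
    rw [isOpen_iff_mem_nhds]
    rintro y ⟨s, hs, rfl⟩
    have hstrict : HasStrictDerivAt T (deriv T s) s :=
      (hT.contDiffAt (hIo.mem_nhds hs)).hasStrictDerivAt (by simp)
    rw [← hstrict.map_nhds_eq (hτne s hs)]
    exact Filter.mem_map.2 (Filter.mem_of_superset (hIo.mem_nhds hs)
      (subset_preimage_image T I))
  intro tt htt xt
  obtain ⟨t, htI, rfl⟩ := htt
  have hτ : deriv T t ≠ 0 := hτne t htI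
  have hW1 : X1 t ≠ 0 := (hX1pos t htI).ne'
  have hX1pow : X1 t ^ r = c4 * deriv T t := by
    rw [hX1def t htI, ← Real.rpow_natCast ((c4 * deriv T t) ^ (1 / (r : ℝ))) r,
      ← Real.rpow_mul (le_of_lt (hT' t htI)), one_div_mul_cancel hrne, Real.rpow_one]
  have hdX1 : deriv X1 t = X1 t * (a0 - g * deriv T t) / ((r : ℝ) - 2) :=
    (hX1d t htI).deriv
  -- smoothness of u t
  have hu_t : ContDiff ℝ (⊤ : ℕ∞) (u t) := by
    rw [← contDiffOn_univ]
    exact ((hu.of_le (by simp)).comp ((contDiff_const.prodMk contDiff_id).contDiffOn)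
      (fun y _ => ⟨htI, mem_univ y⟩))
  -- the slice identity
  have hslice : ∀ y : ℝ, ut (T t) y
      = X1 t / deriv T t * u t ((y - X0 t) / X1 t)
        + (deriv X1 t / deriv T t * ((y - X0 t) / X1 t) + deriv X0 t / deriv T t) := by
    intro y
    have h := hutdef t htI ((y - X0 t) / X1 t)
    rw [show X1 t * ((y - X0 t) / X1 t) + X0 t = y by field_simp; ring] at h
    rw [h]; ring
  -- spatial derivative of order 1
  have haffd : HasDerivAt (fun y : ℝ => (y - X0 t) / X1 t) (1 / X1 t) xt :=
    ((hasDerivAt_id xt).sub_const (X0 t)).div_const (X1 t)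
  have hu1d : HasDerivAt (u t) (deriv (u t) ((xt - X0 t) / X1 t)) ((xt - X0 t) / X1 t) :=
    ((hu_t.differentiable hone) ((xt - X0 t) / X1 t)).hasDerivAt
  have hpdx1t : pdx ut 1 (T t) xt
      = X1 t / deriv T t * (pdx u 1 t ((xt - X0 t) / X1 t) * (1 / X1 t))
        + deriv X1 t / deriv T t * (1 / X1 t) := by
    have hfun1 : ut (T t) = fun y =>
        X1 t / deriv T t * u t ((y - X0 t) / X1 t)
        + (deriv X1 t / deriv T t * ((y - X0 t) / X1 t) + deriv X0 t / deriv T t) :=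
      funext hslice
    have htot : HasDerivAt (fun y =>
        X1 t / deriv T t * u t ((y - X0 t) / X1 t)
        + (deriv X1 t / deriv T t * ((y - X0 t) / X1 t) + deriv X0 t / deriv T t))
        (X1 t / deriv T t * (deriv (u t) ((xt - X0 t) / X1 t) * (1 / X1 t))
          + deriv X1 t / deriv T t * (1 / X1 t)) xt := by
      exact ((hu1d.comp xt haffd).const_mul (X1 t / deriv T t)).add
        ((haffd.const_mul (deriv X1 t / deriv T t)).add_const (deriv X0 t / deriv T t))
    simp only [pdx, iteratedDeriv_one]
    rw [hfun1]
    exact htot.deriv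
  -- spatial derivative of order r
  have hpdxr : pdx ut r (T t) xt
      = X1 t / deriv T t * ((1 / X1 t) ^ r * pdx u r t ((xt - X0 t) / X1 t)) := by
    have hfun2 : ut (T t) = (fun y => X1 t / deriv T t * u t ((y - X0 t) / X1 t))
        + (fun y => deriv X1 t / (deriv T t * X1 t) * y
            + (deriv X0 t / deriv T t - deriv X1 t / (deriv T t * X1 t) * X0 t)) := by
      funext y
      simp only [Pi.add_apply]
      rw [hslice y]
      field_simp
      ring
    have hcA' : ContDiff ℝ (r : ℕ∞) (fun y : ℝ => u t ((y - X0 t) / X1 t)) :=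
      (hu_t.of_le (WithTop.coe_le_coe.2 le_top)).comp
        ((contDiff_id.sub contDiff_const).div_const (X1 t))
    have hcA : ContDiffOn ℝ (r : ℕ∞) (fun y : ℝ => u t ((y - X0 t) / X1 t)) univ :=
      hcA'.contDiffOn
    have hcAm : ContDiffOn ℝ (r : ℕ∞)
        (fun y : ℝ => X1 t / deriv T t * u t ((y - X0 t) / X1 t)) univ :=
      (contDiff_const.mul hcA').contDiffOn
    have hcB : ContDiffOn ℝ (r : ℕ∞) (fun y : ℝ => deriv X1 t / (deriv T t * X1 t) * y
        + (deriv X0 t / deriv T t - deriv X1 t / (deriv T t * X1 t) * X0 t)) univ := by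
      apply ContDiff.contDiffOn
      exact (contDiff_const.mul contDiff_id).add contDiff_const
    simp only [pdx]
    rw [hfun2, ← iteratedDerivWithin_univ,
      iteratedDerivWithin_add (mem_univ xt) uniqueDiffOn_univ (hcAm xt (mem_univ xt)) (hcB xt (mem_univ xt))]
    rw [iteratedDerivWithin_univ, iteratedDerivWithin_univ]
    rw [iter_affine_zero (by omega) _ _]
    have hmul : iteratedDeriv r (fun y : ℝ => X1 t / deriv T t * u t ((y - X0 t) / X1 t)) xt
        = X1 t / deriv T t * iteratedDeriv r (fun y : ℝ => u t ((y - X0 t) / X1 t)) xt := by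
      rw [← iteratedDerivWithin_univ, ← iteratedDerivWithin_univ]
      exact iteratedDerivWithin_const_mul (mem_univ xt) uniqueDiffOn_univ _ (hcA xt (mem_univ xt))
    rw [Pi.zero_apply, add_zero, hmul, iter_comp_affine hu_t hW1 (X0 t) r xt]
  -- value of ut at (T t, xt)
  have hutv : ut (T t) xt
      = X1 t / deriv T t * u t ((xt - X0 t) / X1 t)
        + (deriv X1 t / deriv T t * ((xt - X0 t) / X1 t) + deriv X0 t / deriv T t) :=
    hslice xt
  -- time derivative: fderiv of u at (t, e)
  have hmemu : (t, (xt - X0 t) / X1 t) ∈ I ×ˢ (univ : Set ℝ) := ⟨htI, mem_univ _⟩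
  have hudA : DifferentiableAt ℝ (fun p : ℝ × ℝ => u p.1 p.2) (t, (xt - X0 t) / X1 t) :=
    (hu.differentiableOn (by simp)).differentiableAt
      ((hIo.prod isOpen_univ).mem_nhds hmemu)
  have hLf : HasFDerivAt (fun p : ℝ × ℝ => u p.1 p.2)
      (fderiv ℝ (fun p : ℝ × ℝ => u p.1 p.2) (t, (xt - X0 t) / X1 t))
      (t, (xt - X0 t) / X1 t) := hudA.hasFDerivAt
  have hpdtx : pdt u t ((xt - X0 t) / X1 t)
      = fderiv ℝ (fun p : ℝ × ℝ => u p.1 p.2) (t, (xt - X0 t) / X1 t) (1, 0) := by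
    have h1 : HasDerivAt (fun s : ℝ => (s, (xt - X0 t) / X1 t)) ((1 : ℝ), (0 : ℝ)) t :=
      (hasDerivAt_id t).prodMk (hasDerivAt_const t _)
    have h2 := hLf.comp_hasDerivAt t h1
    simp only [pdt]
    exact h2.deriv
  have hpdx1x : pdx u 1 t ((xt - X0 t) / X1 t)
      = fderiv ℝ (fun p : ℝ × ℝ => u p.1 p.2) (t, (xt - X0 t) / X1 t) (0, 1) := by
    have h1 : HasDerivAt (fun y : ℝ => (t, y)) ((0 : ℝ), (1 : ℝ)) ((xt - X0 t) / X1 t) :=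
      (hasDerivAt_const _ t).prodMk (hasDerivAt_id _)
    have h2 := hLf.comp_hasDerivAt ((xt - X0 t) / X1 t) h1
    simp only [pdx, iteratedDeriv_one]
    exact h2.deriv
  -- curve derivative
  have hξd : HasDerivAt (fun s => (xt - X0 s) / X1 s)
      ((-deriv X0 t * X1 t - (xt - X0 t) * (X1 t * (a0 - g * deriv T t) / ((r : ℝ) - 2)))
        / X1 t ^ 2) t :=
    ((hX0d t htI).const_sub xt).div (hX1d t htI) hW1
  -- chain rule for u along the curve
  have hchain : HasDerivAt (fun s => u s ((xt - X0 s) / X1 s))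
      (pdt u t ((xt - X0 t) / X1 t)
        + ((-deriv X0 t * X1 t - (xt - X0 t) * (X1 t * (a0 - g * deriv T t) / ((r : ℝ) - 2)))
            / X1 t ^ 2) * pdx u 1 t ((xt - X0 t) / X1 t)) t := by
    have h1 : HasDerivAt (fun s => (s, (xt - X0 s) / X1 s))
        ((1 : ℝ), ((-deriv X0 t * X1 t
          - (xt - X0 t) * (X1 t * (a0 - g * deriv T t) / ((r : ℝ) - 2))) / X1 t ^ 2)) t :=
      (hasDerivAt_id t).prodMk hξd
    have h2 := hLf.comp_hasDerivAt t h1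
    have h3 : ((1 : ℝ), ((-deriv X0 t * X1 t
          - (xt - X0 t) * (X1 t * (a0 - g * deriv T t) / ((r : ℝ) - 2))) / X1 t ^ 2))
        = ((1 : ℝ), (0 : ℝ)) + ((-deriv X0 t * X1 t
          - (xt - X0 t) * (X1 t * (a0 - g * deriv T t) / ((r : ℝ) - 2))) / X1 t ^ 2)
            • ((0 : ℝ), (1 : ℝ)) := by
      simp [Prod.ext_iff]
    rw [h3, map_add, map_smul, smul_eq_mul, ← hpdtx, ← hpdx1x] at h2
    exact h2
  -- derivative of T at t with ode value
  have hTdd' : HasDerivAt (deriv T)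
      ((r : ℝ) / ((r : ℝ) - 2) * (a0 - g * deriv T t) * deriv T t) t :=
    hTode' t htI ▸ hTdd t htI
  -- pieces A, B, C
  have hAd : HasDerivAt (fun s => X1 s / deriv T s)
      ((X1 t * (a0 - g * deriv T t) / ((r : ℝ) - 2) * deriv T t
        - X1 t * ((r : ℝ) / ((r : ℝ) - 2) * (a0 - g * deriv T t) * deriv T t))
          / deriv T t ^ 2) t :=
    (hX1d t htI).div hTdd' hτ
  have hBd : HasDerivAt (fun s => X1 s * (a0 - g * deriv T s) / (((r : ℝ) - 2) * deriv T s))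
      (((X1 t * (a0 - g * deriv T t) / ((r : ℝ) - 2) * (a0 - g * deriv T t)
          + X1 t * (-(g * ((r : ℝ) / ((r : ℝ) - 2) * (a0 - g * deriv T t) * deriv T t))))
        * (((r : ℝ) - 2) * deriv T t)
        - X1 t * (a0 - g * deriv T t)
          * (((r : ℝ) - 2) * ((r : ℝ) / ((r : ℝ) - 2) * (a0 - g * deriv T t) * deriv T t)))
        / (((r : ℝ) - 2) * deriv T t) ^ 2) t :=
    ((hX1d t htI).mul ((hTdd'.const_mul g).const_sub a0)).div
      (hTdd'.const_mul ((r : ℝ) - 2)) (mul_ne_zero hr2 hτ)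
  have hCd : HasDerivAt (fun s => deriv X0 s / deriv T s)
      (deriv (fun s => deriv X0 s / deriv T s) t) t := by
    have hdiff : DifferentiableAt ℝ (fun s => deriv X0 s / deriv T s) t :=
      (((hX01.differentiableOn hone).differentiableAt (hIo.mem_nhds htI))).div
        (((hT1.differentiableOn hone).differentiableAt (hIo.mem_nhds htI))) hτ
    exact hdiff.hasDerivAt
  -- F and its derivative
  have hFd := ((hAd.mul hchain).add (hBd.mul hξd)).add hCd
  -- ut ∘ T agrees with F near t
  have hFeq : (fun s => ut (T s) xt) =ᶠ[nhds t] (fun s =>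
      X1 s / deriv T s * u s ((xt - X0 s) / X1 s)
        + X1 s * (a0 - g * deriv T s) / (((r : ℝ) - 2) * deriv T s) * ((xt - X0 s) / X1 s)
        + deriv X0 s / deriv T s) := by
    filter_upwards [hIo.mem_nhds htI] with s hs
    have hW1s : X1 s ≠ 0 := (hX1pos s hs).ne'
    have h := hutdef s hs ((xt - X0 s) / X1 s)
    rw [show X1 s * ((xt - X0 s) / X1 s) + X0 s = xt by field_simp; ring] at h
    rw [h, (hX1d s hs).deriv]
    have hτs := hτne s hs
    field_simp
  have hFd' : HasDerivAt (fun s => ut (T s) xt)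
      (((X1 t * (a0 - g * deriv T t) / ((r : ℝ) - 2) * deriv T t
        - X1 t * ((r : ℝ) / ((r : ℝ) - 2) * (a0 - g * deriv T t) * deriv T t))
          / deriv T t ^ 2 * u t ((xt - X0 t) / X1 t)
        + X1 t / deriv T t * (pdt u t ((xt - X0 t) / X1 t)
          + ((-deriv X0 t * X1 t - (xt - X0 t) * (X1 t * (a0 - g * deriv T t) / ((r : ℝ) - 2)))
              / X1 t ^ 2) * pdx u 1 t ((xt - X0 t) / X1 t))
        + (((X1 t * (a0 - g * deriv T t) / ((r : ℝ) - 2) * (a0 - g * deriv T t)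
          + X1 t * (-(g * ((r : ℝ) / ((r : ℝ) - 2) * (a0 - g * deriv T t) * deriv T t))))
        * (((r : ℝ) - 2) * deriv T t)
        - X1 t * (a0 - g * deriv T t)
          * (((r : ℝ) - 2) * ((r : ℝ) / ((r : ℝ) - 2) * (a0 - g * deriv T t) * deriv T t)))
        / (((r : ℝ) - 2) * deriv T t) ^ 2 * ((xt - X0 t) / X1 t)
          + X1 t * (a0 - g * deriv T t) / (((r : ℝ) - 2) * deriv T t)
            * ((-deriv X0 t * X1 t
              - (xt - X0 t) * (X1 t * (a0 - g * deriv T t) / ((r : ℝ) - 2))) / X1 t ^ 2))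
        + deriv (fun s => deriv X0 s / deriv T s) t)) t :=
    hFd.congr_of_eventuallyEq hFeq
  -- time derivative of ut
  have hGd : HasDerivAt (fun s => ut s xt) (pdt ut (T t) xt) (T t) := by
    have hmem2 : (T t, xt) ∈ (T '' I) ×ˢ (univ : Set ℝ) := ⟨⟨t, htI, rfl⟩, mem_univ xt⟩
    have hd : DifferentiableAt ℝ (fun p : ℝ × ℝ => ut p.1 p.2) (T t, xt) :=
      (hut.differentiableOn (by simp)).differentiableAt
        ((hTopen.prod isOpen_univ).mem_nhds hmem2)
    have h1 : HasDerivAt (fun s : ℝ => (s, xt)) ((1 : ℝ), (0 : ℝ)) (T t) :=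
      (hasDerivAt_id _).prodMk (hasDerivAt_const _ _)
    have h2 := hd.hasFDerivAt.comp_hasDerivAt (T t) h1
    have h3 : pdt ut (T t) xt
        = fderiv ℝ (fun p : ℝ × ℝ => ut p.1 p.2) (T t, xt) (1, 0) := by
      simp only [pdt]
      exact h2.deriv
    rw [h3]
    exact h2
  have hcomp : HasDerivAt (fun s => ut (T s) xt) (pdt ut (T t) xt * deriv T t) t :=
    hGd.comp t (hTd t htI)
  have hkey := hcomp.unique hFd'
  -- final assembly
  have hueqt := hueq t htI ((xt - X0 t) / X1 t)
  have hX0odet := hX0ode t htI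
  have hpow : (1 / X1 t) ^ r = 1 / (c4 * deriv T t) := by
    rw [div_pow, one_pow, hX1pow]
  have hpdtval : pdt ut (T t) xt = (((X1 t * (a0 - g * deriv T t) / ((r : ℝ) - 2) * deriv T t
        - X1 t * ((r : ℝ) / ((r : ℝ) - 2) * (a0 - g * deriv T t) * deriv T t))
          / deriv T t ^ 2 * u t ((xt - X0 t) / X1 t)
        + X1 t / deriv T t * (pdt u t ((xt - X0 t) / X1 t)
          + ((-deriv X0 t * X1 t - (xt - X0 t) * (X1 t * (a0 - g * deriv T t) / ((r : ℝ) - 2)))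
              / X1 t ^ 2) * pdx u 1 t ((xt - X0 t) / X1 t))
        + (((X1 t * (a0 - g * deriv T t) / ((r : ℝ) - 2) * (a0 - g * deriv T t)
          + X1 t * (-(g * ((r : ℝ) / ((r : ℝ) - 2) * (a0 - g * deriv T t) * deriv T t))))
        * (((r : ℝ) - 2) * deriv T t)
        - X1 t * (a0 - g * deriv T t)
          * (((r : ℝ) - 2) * ((r : ℝ) / ((r : ℝ) - 2) * (a0 - g * deriv T t) * deriv T t)))
        / (((r : ℝ) - 2) * deriv T t) ^ 2 * ((xt - X0 t) / X1 t)
          + X1 t * (a0 - g * deriv T t) / (((r : ℝ) - 2) * deriv T t)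
            * ((-deriv X0 t * X1 t
              - (xt - X0 t) * (X1 t * (a0 - g * deriv T t) / ((r : ℝ) - 2))) / X1 t ^ 2))
        + deriv (fun s => deriv X0 s / deriv T s) t)) / deriv T t := by
    rw [eq_div_iff hτ]
    exact hkey
  have hCdval : deriv (fun s => deriv X0 s / deriv T s) t
      = deriv T t * (bt0 - b0 * X1 t / deriv T t ^ 2
        + g * (deriv X0 t / deriv T t)
        + ((r : ℝ) - 1) / ((r : ℝ) - 2) ^ 2 * g ^ 2 * X0 t) := by
    rw [← hX0odet]
    field_simp
    ring
  have hpdtu : pdt u t ((xt - X0 t) / X1 t)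
      = ar * pdx u r t ((xt - X0 t) / X1 t) + a0 * u t ((xt - X0 t) / X1 t)
        + ((r : ℝ) - 1) / ((r : ℝ) - 2) ^ 2 * a0 ^ 2 * ((xt - X0 t) / X1 t) + b0
        - u t ((xt - X0 t) / X1 t) * pdx u 1 t ((xt - X0 t) / X1 t) := by
    linarith [hueqt]
  rw [hpdx1t, hpdxr, hutv, hpdtval, hCdval, hpdtu, hdX1, hpow]
  field_simp
  ring
end

section
/- Admissible transformations within the subclass F_{IV,0} with r = 2: let a₂ ≠ 0, b₁, b₀, b̃₁, b̃₀ be real constants and c₄ ≠ 0. Let I ⊆ ℝ be an open interval, T smooth on I with c₄T′(t) > 0 for all t ∈ I, and set X¹(t) = (c₄T′(t))^{1/2}. Suppose T satisfies (T″/T′)′ − (1/2)(T″/T′)² = 2b̃₁T′² − 2b₁ on I, and X⁰ is smooth on I satisfying (1/T′)·(X⁰′/T′)′ − b̃₁X⁰ = b̃₀ − b₀X¹/T′² on I. If u solves u_t + u u_x = a₂u₂ + b₁x + b₀ on I × ℝ, then the transformed function ũ of u under (T, X¹, X⁰) solves ũ_t + ũ ũ_x = c₄a₂ũ₂ + b̃₁x̃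 + b̃₀ on T(I) × ℝ. -/
open Real Set

set_option maxHeartbeats 2000000 in
theorem stmt17 (a2 : ℝ) (ha2 : a2 ≠ 0) (b1 b0 bt1 bt0 : ℝ)
    (c4 : ℝ) (hc4 : c4 ≠ 0)
    (I : Set ℝ) (hIo : IsOpen I) (hIc : I.OrdConnected)
    (T : ℝ → ℝ) (hT : ContDiffOn ℝ (⊤ : ℕ∞) T I)
    (hT' : ∀ t ∈ I, 0 < c4 * deriv T t)
    (X1 : ℝ → ℝ) (hX1def : ∀ t ∈ I, X1 t = (c4 * deriv T t) ^ ((1 : ℝ) / 2))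
    (hTode : ∀ t ∈ I,
      deriv (fun s => deriv (deriv T) s / deriv T s) t
        - (1 / 2) * (deriv (deriv T) t / deriv T t) ^ 2
        = 2 * bt1 * (deriv T t) ^ 2 - 2 * b1)
    (X0 : ℝ → ℝ) (hX0 : ContDiffOn ℝ (⊤ : ℕ∞) X0 I)
    (hX0ode : ∀ t ∈ I,
      (1 / deriv T t) * deriv (fun s => deriv X0 s / deriv T s) t - bt1 * X0 t
        = bt0 - b0 * X1 t / (deriv T t) ^ 2)
    (u : ℝ → ℝ → ℝ)
    (hu : ContDiffOn ℝ (⊤ : ℕ∞) (fun p : ℝ × ℝ => u p.1 p.2) (I ×ˢ (univ : Set ℝ)))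
    (hueq : ∀ t ∈ I, ∀ x : ℝ,
      pdt u t x + u t x * pdx u 1 t x = a2 * pdx u 2 t x + b1 * x + b0)
    (ut : ℝ → ℝ → ℝ)
    (hut : ContDiffOn ℝ (⊤ : ℕ∞) (fun p : ℝ × ℝ => ut p.1 p.2) ((T '' I) ×ˢ (univ : Set ℝ)))
    (hutdef : ∀ t ∈ I, ∀ x : ℝ,
      ut (T t) (X1 t * x + X0 t)
        = X1 t / deriv T t * u t x + deriv X1 t / deriv T t * x
          + deriv X0 t / deriv T t) :
    ∀ tt ∈ T '' I, ∀ xt : ℝ,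
      pdt ut tt xt + ut tt xt * pdx ut 1 tt xt
        = c4 * a2 * pdx ut 2 tt xt + bt1 * xt + bt0 := by
  intro tt htt xt
  obtain ⟨t₀, ht₀, rfl⟩ := htt
  -- basic derivative infrastructure
  have hda : ∀ f : ℝ → ℝ, ContDiffOn ℝ (⊤ : ℕ∞) f I → ∀ t ∈ I, HasDerivAt f (deriv f t) t :=
    fun f hf t ht => ((hf.contDiffAt (hIo.mem_nhds ht)).differentiableAt (by simp)).hasDerivAt
  have hT1 : ContDiffOn ℝ (⊤ : ℕ∞) (deriv T) I := hT.deriv_of_isOpen hIo (by simp)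
  have hT2 : ContDiffOn ℝ (⊤ : ℕ∞) (deriv (deriv T)) I := hT1.deriv_of_isOpen hIo (by simp)
  have hX0d1 : ContDiffOn ℝ (⊤ : ℕ∞) (deriv X0) I := hX0.deriv_of_isOpen hIo (by simp)
  have hpne : ∀ t ∈ I, deriv T t ≠ 0 := by
    intro t ht h
    have := hT' t ht
    rw [h] at this; simp at this
  have hX1pos : ∀ t ∈ I, 0 < X1 t := by
    intro t ht
    rw [hX1def t ht]
    exact Real.rpow_pos_of_pos (hT' t ht) _
  have hX1ne : ∀ t ∈ I, X1 t ≠ 0 := fun t ht => (hX1pos t ht).ne'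
  have hX1sqrt : ∀ t ∈ I, X1 t = Real.sqrt (c4 * deriv T t) := by
    intro t ht
    rw [hX1def t ht, Real.sqrt_eq_rpow]
  have hX1ev : ∀ t ∈ I, X1 =ᶠ[nhds t] fun s => Real.sqrt (c4 * deriv T s) := by
    intro t ht
    filter_upwards [hIo.mem_nhds ht] with s hs using hX1sqrt s hs
  -- derivative of X1
  have hX1d : ∀ t ∈ I, HasDerivAt X1 (c4 * deriv (deriv T) t / (2 * X1 t)) t := by
    intro t ht
    have h1 : HasDerivAt (fun s => c4 * deriv T s) (c4 * deriv (deriv T) t) t :=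
      (hda _ hT1 t ht).const_mul c4
    have h2 := h1.sqrt (hT' t ht).ne'
    rw [← hX1sqrt t ht] at h2
    exact h2.congr_of_eventuallyEq (hX1ev t ht)
  have hvd : deriv X1 t₀ = c4 * deriv (deriv T) t₀ / (2 * X1 t₀) := (hX1d t₀ ht₀).deriv
  -- derivative of deriv X1
  have hX1devev : deriv X1 =ᶠ[nhds t₀] fun s => c4 * deriv (deriv T) s / (2 * Real.sqrt (c4 * deriv T s)) := by
    filter_upwards [hIo.mem_nhds ht₀] with s hs
    rw [(hX1d s hs).deriv, hX1sqrt s hs]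
  have hsne : Real.sqrt (c4 * deriv T t₀) ≠ 0 := by
    rw [← hX1sqrt t₀ ht₀]; exact hX1ne t₀ ht₀
  have hX1dd : HasDerivAt (deriv X1)
      ((c4 * deriv (deriv (deriv T)) t₀ * (2 * X1 t₀)
        - c4 * deriv (deriv T) t₀ * (2 * (c4 * deriv (deriv T) t₀ / (2 * X1 t₀))))
        / (2 * X1 t₀) ^ 2) t₀ := by
    have h1 : HasDerivAt (fun s => c4 * deriv (deriv T) s) (c4 * deriv (deriv (deriv T)) t₀) t₀ :=
      (hda _ hT2 t₀ ht₀).const_mul c4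
    have h2 : HasDerivAt (fun s => Real.sqrt (c4 * deriv T s))
        (c4 * deriv (deriv T) t₀ / (2 * Real.sqrt (c4 * deriv T t₀))) t₀ :=
      ((hda _ hT1 t₀ ht₀).const_mul c4).sqrt (hT' t₀ ht₀).ne'
    have h3 := h1.div (h2.const_mul 2) (by positivity)
    rw [← hX1sqrt t₀ ht₀] at h3
    exact h3.congr_of_eventuallyEq hX1devev
  -- the slice u t₀ is smooth on ℝ
  have hUsl : ContDiff ℝ (⊤ : ℕ∞) (u t₀) := by
    have hc : ContDiff ℝ (⊤ : ℕ∞) (fun x : ℝ => ((t₀, x) : ℝ × ℝ)) := contDiff_const.prodMk contDiff_id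
    have := ContDiffOn.comp (s := (univ : Set ℝ)) hu hc.contDiffOn (fun x _ => ⟨ht₀, mem_univ _⟩)
    rw [contDiffOn_univ] at this
    exact this
  have hU1 : ∀ y, HasDerivAt (u t₀) (deriv (u t₀) y) y :=
    fun y => ((hUsl.differentiable (by simp)) y).hasDerivAt
  have hUsl' : ContDiff ℝ ((⊤:ℕ∞) : WithTop ℕ∞) (deriv (u t₀)) :=
    (contDiff_infty_iff_deriv.mp (hUsl.of_le (by simp))).2
  have hU2 : ∀ y, HasDerivAt (deriv (u t₀)) (deriv (deriv (u t₀)) y) y :=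
    fun y => ((hUsl'.differentiable (by simp)) y).hasDerivAt
  -- full Fréchet derivative of u at (t₀, x₀)
  have hx₀mem : ((t₀, (xt - X0 t₀) / X1 t₀) : ℝ × ℝ) ∈ I ×ˢ (univ : Set ℝ) := ⟨ht₀, mem_univ _⟩
  have hFd : DifferentiableAt ℝ (fun p : ℝ × ℝ => u p.1 p.2) (t₀, (xt - X0 t₀) / X1 t₀) :=
    (hu.contDiffAt ((hIo.prod isOpen_univ).mem_nhds hx₀mem)).differentiableAt (by simp)
  set L := fderiv ℝ (fun p : ℝ × ℝ => u p.1 p.2) (t₀, (xt - X0 t₀) / X1 t₀) with hL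
  have hFD : HasFDerivAt (fun p : ℝ × ℝ => u p.1 p.2) L (t₀, (xt - X0 t₀) / X1 t₀) := hFd.hasFDerivAt
  have hUt : pdt u t₀ ((xt - X0 t₀) / X1 t₀) = L (1, 0) := by
    have h1 : HasDerivAt (fun s => u s ((xt - X0 t₀) / X1 t₀)) (L ((1:ℝ), (0:ℝ))) t₀ := by
      have := hFD.comp_hasDerivAt t₀ ((hasDerivAt_id t₀).prodMk (hasDerivAt_const t₀ ((xt - X0 t₀) / X1 t₀)))
      simpa [Function.comp_def] using this
    simp only [pdt]
    exact h1.deriv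
  have hUx : deriv (u t₀) ((xt - X0 t₀) / X1 t₀) = L (0, 1) := by
    have h1 : HasDerivAt (fun y => u t₀ y) (L ((0:ℝ), (1:ℝ))) ((xt - X0 t₀) / X1 t₀) := by
      have := hFD.comp_hasDerivAt ((xt - X0 t₀) / X1 t₀)
        ((hasDerivAt_const ((xt - X0 t₀) / X1 t₀) t₀).prodMk (hasDerivAt_id ((xt - X0 t₀) / X1 t₀)))
      simpa [Function.comp_def] using this
    exact h1.deriv
  -- the moving spatial point and its derivative
  have hxd : HasDerivAt (fun s => (xt - X0 s) / X1 s)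
      ((-(deriv X0 t₀) * X1 t₀ - (xt - X0 t₀) * (c4 * deriv (deriv T) t₀ / (2 * X1 t₀))) / X1 t₀ ^ 2) t₀ :=
    ((hda _ hX0 t₀ ht₀).const_sub xt).div (hX1d t₀ ht₀) (hX1ne t₀ ht₀)
  -- derivative of u along the curve s ↦ (s, x(s))
  have hcurve : HasDerivAt (fun s => u s ((xt - X0 s) / X1 s))
      (L (1, 0) + ((-(deriv X0 t₀) * X1 t₀ - (xt - X0 t₀) * (c4 * deriv (deriv T) t₀ / (2 * X1 t₀))) / X1 t₀ ^ 2) * L (0, 1)) t₀ := by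
    have hγ : HasDerivAt (fun s => ((s, (xt - X0 s) / X1 s) : ℝ × ℝ))
        ((1:ℝ), ((-(deriv X0 t₀) * X1 t₀ - (xt - X0 t₀) * (c4 * deriv (deriv T) t₀ / (2 * X1 t₀))) / X1 t₀ ^ 2)) t₀ :=
      (hasDerivAt_id t₀).prodMk hxd
    have h1 := hFD.comp_hasDerivAt t₀ hγ
    have h2 : L ((1:ℝ), ((-(deriv X0 t₀) * X1 t₀ - (xt - X0 t₀) * (c4 * deriv (deriv T) t₀ / (2 * X1 t₀))) / X1 t₀ ^ 2))
        = L (1, 0) + ((-(deriv X0 t₀) * X1 t₀ - (xt - X0 t₀) * (c4 * deriv (deriv T) t₀ / (2 * X1 t₀))) / X1 t₀ ^ 2) * L (0, 1) := by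
      have h3 : ((1:ℝ), ((-(deriv X0 t₀) * X1 t₀ - (xt - X0 t₀) * (c4 * deriv (deriv T) t₀ / (2 * X1 t₀))) / X1 t₀ ^ 2))
          = ((1:ℝ),(0:ℝ)) + ((-(deriv X0 t₀) * X1 t₀ - (xt - X0 t₀) * (c4 * deriv (deriv T) t₀ / (2 * X1 t₀))) / X1 t₀ ^ 2) • ((0:ℝ),(1:ℝ)) := by
        simp
      rw [h3, map_add, map_smul, smul_eq_mul]
    rw [h2] at h1
    simpa [Function.comp_def] using h1
  -- T '' I is a neighborhood of T t₀
  have hstrict : HasStrictDerivAt T (deriv T t₀) t₀ :=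
    (hT.contDiffAt (hIo.mem_nhds ht₀)).hasStrictDerivAt (by simp)
  have hTnhds : T '' I ∈ nhds (T t₀) := by
    rw [← hstrict.map_nhds_eq (hpne t₀ ht₀)]
    exact Filter.image_mem_map (hIo.mem_nhds ht₀)
  have hSd : HasDerivAt (fun s => ut s xt) (pdt ut (T t₀) xt) (T t₀) := by
    have hmem2 : (T '' I) ×ˢ (univ : Set ℝ) ∈ nhds ((T t₀, xt) : ℝ × ℝ) :=
      prod_mem_nhds hTnhds Filter.univ_mem
    have hca : ContDiffAt ℝ (⊤ : ℕ∞) (fun p : ℝ × ℝ => ut p.1 p.2) (T t₀, xt) := hut.contDiffAt hmem2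
    have hline : ContDiffAt ℝ (⊤ : ℕ∞) (fun s : ℝ => ((s, xt) : ℝ × ℝ)) (T t₀) :=
      (contDiff_id.prodMk contDiff_const).contDiffAt
    have h2 := hca.comp (T t₀) hline
    have hd : DifferentiableAt ℝ (fun s => ut s xt) (T t₀) := by
      have := h2.differentiableAt (by simp)
      simpa [Function.comp_def] using this
    simpa [pdt] using hd.hasDerivAt
  have hev : (fun s => ut (T s) xt) =ᶠ[nhds t₀]
      fun s => X1 s / deriv T s * u s ((xt - X0 s) / X1 s)
        + (deriv X1 s / deriv T s * ((xt - X0 s) / X1 s) + deriv X0 s / deriv T s) := by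
    filter_upwards [hIo.mem_nhds ht₀] with s hs
    have h1 : X1 s * ((xt - X0 s) / X1 s) + X0 s = xt := by
      field_simp [hX1ne s hs]
      ring
    have h2 := hutdef s hs ((xt - X0 s) / X1 s)
    rw [h1] at h2
    rw [h2]; ring
  have hTdd : HasDerivAt (deriv T) (deriv (deriv T) t₀) t₀ := hda _ hT1 t₀ ht₀
  have hGd := (((hX1d t₀ ht₀).div hTdd (hpne t₀ ht₀)).mul hcurve).add
      ((((hX1dd.div hTdd (hpne t₀ ht₀))).mul hxd).add
        ((hda _ hX0d1 t₀ ht₀).div hTdd (hpne t₀ ht₀)))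
  have hGd2 := hGd.congr_of_eventuallyEq hev
  have hcomp : HasDerivAt (fun s => ut (T s) xt) (pdt ut (T t₀) xt * deriv T t₀) t₀ := by
    have := hSd.comp t₀ (hda _ hT t₀ ht₀)
    simpa [Function.comp_def] using this
  have hkey := hcomp.unique hGd2
  have hPdt := eq_div_of_mul_eq (hpne t₀ ht₀) hkey
  simp only [Pi.div_apply] at hPdt
  -- spatial derivatives
  have hfun : ut (T t₀) = fun ξ => X1 t₀ / deriv T t₀ * u t₀ ((ξ - X0 t₀) / X1 t₀)
      + deriv X1 t₀ / deriv T t₀ * ((ξ - X0 t₀) / X1 t₀) + deriv X0 t₀ / deriv T t₀ := by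
    funext ξ
    have h1 : X1 t₀ * ((ξ - X0 t₀) / X1 t₀) + X0 t₀ = ξ := by
      field_simp [hX1ne t₀ ht₀]
      ring
    have h2 := hutdef t₀ ht₀ ((ξ - X0 t₀) / X1 t₀)
    rw [h1] at h2
    exact h2
  have hinner : ∀ ξ : ℝ, HasDerivAt (fun η => (η - X0 t₀) / X1 t₀) (1 / X1 t₀) ξ := by
    intro ξ
    simpa using ((hasDerivAt_id ξ).sub_const (X0 t₀)).div_const (X1 t₀)
  have hSder : ∀ ξ : ℝ, HasDerivAt (ut (T t₀))
      (X1 t₀ / deriv T t₀ * (deriv (u t₀) ((ξ - X0 t₀) / X1 t₀) * (1 / X1 t₀))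
        + deriv X1 t₀ / deriv T t₀ * (1 / X1 t₀)) ξ := by
    intro ξ
    rw [hfun]
    exact ((((hU1 _).comp ξ (hinner ξ)).const_mul _).add
      ((hinner ξ).const_mul _)).add_const _
  have hS1 : pdx ut 1 (T t₀) xt
      = X1 t₀ / deriv T t₀ * (deriv (u t₀) ((xt - X0 t₀) / X1 t₀) * (1 / X1 t₀))
        + deriv X1 t₀ / deriv T t₀ * (1 / X1 t₀) := by
    simp only [pdx, iteratedDeriv_one]
    exact (hSder xt).deriv
  have hder1fun : deriv (ut (T t₀)) = fun ξ =>
      X1 t₀ / deriv T t₀ * (deriv (u t₀) ((ξ - X0 t₀) / X1 t₀) * (1 / X1 t₀))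
        + deriv X1 t₀ / deriv T t₀ * (1 / X1 t₀) :=
    funext fun ξ => (hSder ξ).deriv
  have hS2 : pdx ut 2 (T t₀) xt
      = X1 t₀ / deriv T t₀ * ((deriv (deriv (u t₀)) ((xt - X0 t₀) / X1 t₀) * (1 / X1 t₀)) * (1 / X1 t₀)) := by
    have h0 : pdx ut 2 (T t₀) xt = deriv (deriv (ut (T t₀))) xt := by
      simp [pdx, iteratedDeriv_succ, iteratedDeriv_one]
    rw [h0, hder1fun]
    exact (((((hU2 _).comp xt (hinner xt)).mul_const _).const_mul _).add_const _).deriv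
  -- the PDE and ODEs at the point
  have hpdxu1 : pdx u 1 t₀ ((xt - X0 t₀) / X1 t₀) = deriv (u t₀) ((xt - X0 t₀) / X1 t₀) := by
    simp [pdx, iteratedDeriv_one]
  have hpdxu2 : pdx u 2 t₀ ((xt - X0 t₀) / X1 t₀) = deriv (deriv (u t₀)) ((xt - X0 t₀) / X1 t₀) := by
    simp [pdx, iteratedDeriv_succ, iteratedDeriv_one]
  have hA := hueq t₀ ht₀ ((xt - X0 t₀) / X1 t₀)
  rw [hUt, hpdxu1, hpdxu2] at hA
  have hB := hTode t₀ ht₀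
  rw [show (fun s => deriv (deriv T) s / deriv T s) = deriv (deriv T) / deriv T from rfl, ((hda _ hT2 t₀ ht₀).div hTdd (hpne t₀ ht₀)).deriv] at hB
  have hC := hX0ode t₀ ht₀
  rw [show (fun s => deriv X0 s / deriv T s) = deriv X0 / deriv T from rfl, ((hda _ hX0d1 t₀ ht₀).div hTdd (hpne t₀ ht₀)).deriv] at hC
  have hD : X1 t₀ ^ 2 = c4 * deriv T t₀ := by
    rw [hX1sqrt t₀ ht₀]
    exact Real.sq_sqrt (hT' t₀ ht₀).le
  have hval : ut (T t₀) xt = X1 t₀ / deriv T t₀ * u t₀ ((xt - X0 t₀) / X1 t₀)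
      + deriv X1 t₀ / deriv T t₀ * ((xt - X0 t₀) / X1 t₀) + deriv X0 t₀ / deriv T t₀ := by
    rw [hfun]
  have hP := hpne t₀ ht₀
  have hV := hX1ne t₀ ht₀
  field_simp [hP, hV] at hB hC
  have hLt : L (1, 0) = a2 * deriv (deriv (u t₀)) ((xt - X0 t₀) / X1 t₀)
      + b1 * ((xt - X0 t₀) / X1 t₀) + b0
      - u t₀ ((xt - X0 t₀) / X1 t₀) * deriv (u t₀) ((xt - X0 t₀) / X1 t₀) := by
    linarith
  have hR : deriv (deriv (deriv T)) t₀
      = ((2 * bt1 * deriv T t₀ ^ 2 - 2 * b1) * (2 * deriv T t₀ ^ 4)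
          + 3 * deriv T t₀ ^ 2 * deriv (deriv T) t₀ ^ 2) / (2 * deriv T t₀ ^ 3) := by
    rw [eq_div_iff (mul_ne_zero two_ne_zero (pow_ne_zero 3 hP))]
    linear_combination (deriv T t₀ ^ 2) * hB
  have hW2 : deriv (deriv X0) t₀
      = ((bt0 * deriv T t₀ ^ 2 - b0 * X1 t₀) * deriv T t₀ ^ 3
          + deriv X0 t₀ * deriv (deriv T) t₀ * deriv T t₀ ^ 2
          + bt1 * X0 t₀ * deriv T t₀ ^ 5) / deriv T t₀ ^ 3 := by
    rw [eq_div_iff (pow_ne_zero 3 hP)]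
    linear_combination (deriv T t₀ ^ 2) * hC
  have hc4e : c4 = X1 t₀ ^ 2 / deriv T t₀ := by
    rw [eq_div_iff hP]
    linear_combination - hD
  rw [hPdt, hval, hS1, hS2, hvd, ← hUx]
  rw [hLt, hR, hW2, hc4e]
  field_simp [hP, hV]
  ring
end

section
/- The usual equivalence group of the gauged subclass F_{IV,00} with r = 2 (Möbius invariance of u_t + u u_x = a₂u_xx): let a₂ ≠ 0 and let c₁, c₂, c₃, c₀, c₄, X⁰ be real constants with δ := c₁c₀ − c₂c₃ ≠ 0 and c₄δ > 0. Let I ⊆ ℝ be an open interval on which c₃t + c₀ ≠ 0, and set T(t) = (c₁t + c₂)/(c₃t + c₀) and X¹(t) = (c₄T′(t))^{1/2} for t ∈ I. If u solves u_t + u u_x = a₂u₂ on I × ℝ, then the function ũ defined by ũ(T(t), X¹(t)x + X⁰) = (X¹/T′)u(t,x) + (X¹′/T′)x solves ũ_t + ũ ũ_x = c₄a₂ũ₂ on T(I) × ℝ. -/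
open Real Set
open scoped ContDiff

set_option maxHeartbeats 1000000 in
theorem stmt18 (a2 : ℝ) (ha2 : a2 ≠ 0)
    (c1 c2 c3 c0 c4 X0 : ℝ) (hδ : c1 * c0 - c2 * c3 ≠ 0)
    (hc4δ : 0 < c4 * (c1 * c0 - c2 * c3))
    (I : Set ℝ) (hIo : IsOpen I) (hIc : I.OrdConnected)
    (hI : ∀ t ∈ I, c3 * t + c0 ≠ 0)
    (T : ℝ → ℝ) (hTdef : ∀ t ∈ I, T t = (c1 * t + c2) / (c3 * t + c0))
    (X1 : ℝ → ℝ) (hX1def : ∀ t ∈ I, X1 t = (c4 * deriv T t) ^ ((1 : ℝ) / 2))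
    (u : ℝ → ℝ → ℝ)
    (hu : ContDiffOn ℝ (⊤ : ℕ∞) (fun p : ℝ × ℝ => u p.1 p.2) (I ×ˢ (univ : Set ℝ)))
    (hueq : ∀ t ∈ I, ∀ x : ℝ,
      pdt u t x + u t x * pdx u 1 t x = a2 * pdx u 2 t x)
    (ut : ℝ → ℝ → ℝ)
    (hut : ContDiffOn ℝ (⊤ : ℕ∞) (fun p : ℝ × ℝ => ut p.1 p.2) ((T '' I) ×ˢ (univ : Set ℝ)))
    (hutdef : ∀ t ∈ I, ∀ x : ℝ,
      ut (T t) (X1 t * x + X0)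
        = X1 t / deriv T t * u t x + deriv X1 t / deriv T t * x) :
    ∀ tt ∈ T '' I, ∀ xt : ℝ,
      pdt ut tt xt + ut tt xt * pdx ut 1 tt xt = c4 * a2 * pdx ut 2 tt xt := by
  rcases I.eq_empty_or_nonempty with hIe | ⟨t0, ht0⟩
  · rintro tt ⟨t, htI, rfl⟩; rw [hIe] at htI; exact absurd htI (notMem_empty t)
  set δ : ℝ := c1 * c0 - c2 * c3 with hδdef
  have hc4 : c4 ≠ 0 := by rintro rfl; simp at hc4δ
  -- constant sign of c3 t + c0 on I
  set ε : ℝ := if 0 < c3 * t0 + c0 then 1 else -1 with hεdef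
  have hIVT : ∀ t ∈ I, ∀ t' ∈ I, 0 < c3 * t + c0 → 0 < c3 * t' + c0 := by
    intro t ht t' ht' h1
    by_contra h2
    push_neg at h2
    have h2' : c3 * t' + c0 < 0 := lt_of_le_of_ne h2 (hI t' ht')
    have hsub : uIcc t' t ⊆ I := hIc.uIcc_subset ht' ht
    have hcont : ContinuousOn (fun τ => c3 * τ + c0) (uIcc t' t) :=
      (by continuity : Continuous fun τ => c3 * τ + c0).continuousOn
    have h0 : (0 : ℝ) ∈ uIcc (c3 * t' + c0) (c3 * t + c0) := by
      rw [Set.mem_uIcc]; left; exact ⟨h2'.le, h1.le⟩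
    obtain ⟨c, hc, hc0⟩ := intermediate_value_uIcc hcont h0
    exact hI c (hsub hc) hc0
  have hεne : ε ≠ 0 := by rw [hεdef]; split <;> norm_num
  have hε2 : ε * ε = 1 := by rw [hεdef]; split <;> norm_num
  have hεpos : ∀ t ∈ I, 0 < ε * (c3 * t + c0) := by
    intro t ht
    rcases lt_or_gt_of_ne (hI t0 ht0) with h | h
    · have hε : ε = -1 := by
        rw [hεdef, if_neg]; exact fun h' => absurd h (not_lt.2 h'.le)
      rw [hε]
      rcases lt_or_gt_of_ne (hI t ht) with h' | h'
      · nlinarith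
      · exact absurd (hIVT t ht t0 ht0 h') (not_lt.2 h.le)
    · have hε : ε = 1 := by rw [hεdef, if_pos h]
      rw [hε]; simpa using hIVT t0 ht0 t ht h
  set K : ℝ := ε * Real.sqrt (c4 * δ) with hKdef
  have hsq : Real.sqrt (c4 * δ) ^ 2 = c4 * δ := Real.sq_sqrt hc4δ.le
  have hK2 : K ^ 2 = c4 * δ := by
    rw [hKdef, mul_pow]; rw [show ε ^ 2 = 1 by nlinarith [hε2], one_mul, hsq]
  have hKne : K ≠ 0 := by
    intro h
    have : Real.sqrt (c4 * δ) ≠ 0 := by positivity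
    exact this (by simpa [hKdef, hεne] using h)
  -- derivative of T
  have hTs : ∀ t ∈ I, HasStrictDerivAt T (δ / (c3 * t + c0) ^ 2) t := by
    intro t ht
    have h1 : HasStrictDerivAt (fun τ => c1 * τ + c2) c1 t := by
      simpa using ((hasStrictDerivAt_id t).const_mul c1).add_const c2
    have h2 : HasStrictDerivAt (fun τ => c3 * τ + c0) c3 t := by
      simpa using ((hasStrictDerivAt_id t).const_mul c3).add_const c0
    have h3 := h1.div h2 (hI t ht)
    have heq : T =ᶠ[nhds t] fun τ => (c1 * τ + c2) / (c3 * τ + c0) :=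
      Filter.eventuallyEq_of_mem (hIo.mem_nhds ht) fun τ hτ => hTdef τ hτ
    have h4 : HasStrictDerivAt T
        ((c1 * (c3 * t + c0) - (c1 * t + c2) * c3) / (c3 * t + c0) ^ 2) t :=
      h3.congr_of_eventuallyEq heq.symm
    convert h4 using 2
    ring
  have hT' : ∀ t ∈ I, deriv T t = δ / (c3 * t + c0) ^ 2 := fun t ht =>
    (hTs t ht).hasDerivAt.deriv
  -- value of X1
  have hX1val : ∀ t ∈ I, X1 t = K / (c3 * t + c0) := by
    intro t ht
    have hsne := hI t ht
    rw [hX1def t ht, hT' t ht, ← Real.sqrt_eq_rpow]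
    have h1 : c4 * (δ / (c3 * t + c0) ^ 2) = (c4 * δ) / (c3 * t + c0) ^ 2 := by ring
    rw [h1, Real.sqrt_div hc4δ.le, Real.sqrt_sq_eq_abs]
    have habs : |c3 * t + c0| = ε * (c3 * t + c0) := by
      have h2 := abs_of_pos (hεpos t ht)
      rw [abs_mul] at h2
      have hε1 : |ε| = 1 := by rcases abs_cases ε with ⟨h, _⟩ | ⟨h, _⟩ <;> nlinarith [hε2]
      rw [hε1, one_mul] at h2
      exact h2
    rw [habs, hKdef, div_eq_div_iff (mul_ne_zero hεne hsne) hsne]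
    linear_combination (-(Real.sqrt (c4 * δ) * (c3 * t + c0))) * hε2
  -- derivative of X1
  have hX1d : ∀ t ∈ I, HasDerivAt X1 (-(K * c3) / (c3 * t + c0) ^ 2) t := by
    intro t ht
    have h2 : HasDerivAt (fun τ => c3 * τ + c0) c3 t := by
      simpa using ((hasDerivAt_id t).const_mul c3).add_const c0
    have h3 := (hasDerivAt_const t K).div h2 (hI t ht)
    have heq : X1 =ᶠ[nhds t] fun τ => K / (c3 * τ + c0) :=
      Filter.eventuallyEq_of_mem (hIo.mem_nhds ht) fun τ hτ => hX1val τ hτ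
    have h4 := h3.congr_of_eventuallyEq heq
    rw [show -(K * c3) / (c3 * t + c0) ^ 2 = (0 * (c3 * t + c0) - K * c3) / (c3 * t + c0) ^ 2 by ring]
    exact h4
  have hX1' : ∀ t ∈ I, deriv X1 t = -(K * c3) / (c3 * t + c0) ^ 2 := fun t ht =>
    (hX1d t ht).deriv
  -- openness of T '' I
  have hTIopen : IsOpen (T '' I) := by
    rw [isOpen_iff_mem_nhds]
    rintro _ ⟨t, ht, rfl⟩
    have h5 := (hTs t ht).map_nhds_eq (div_ne_zero hδ (pow_ne_zero 2 (hI t ht)))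
    rw [← h5]
    exact Filter.image_mem_map (hIo.mem_nhds ht)
  -- time-slice differentiability of u
  have hud : ∀ τ ∈ I, ∀ y : ℝ, HasDerivAt (fun σ => u σ y) (pdt u τ y) τ := by
    intro τ hτ y
    have hmem : (τ, y) ∈ I ×ˢ (univ : Set ℝ) := ⟨hτ, mem_univ y⟩
    have hD : DifferentiableAt ℝ (fun p : ℝ × ℝ => u p.1 p.2) (τ, y) :=
      (hu.contDiffAt (((hIo.prod isOpen_univ)).mem_nhds hmem)).differentiableAt (by simp)
    have h6 := hD.hasFDerivAt.comp_hasDerivAt τ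
      ((hasDerivAt_id τ).prodMk (hasDerivAt_const τ y))
    have h7 : HasDerivAt (fun σ => u σ y)
        (fderiv ℝ (fun p : ℝ × ℝ => u p.1 p.2) (τ, y) (1, 0)) τ := h6
    simpa [pdt, h7.deriv] using h7
  -- space-slice smoothness of u
  have huslice : ∀ τ ∈ I, ContDiff ℝ (⊤ : ℕ∞) (u τ) := by
    intro τ hτ
    rw [← contDiffOn_univ]
    exact hu.comp (contDiff_const.prodMk contDiff_id).contDiffOn
      (fun y _ => ⟨hτ, mem_univ y⟩)
  clear hδdef hεdef hKdef
  clear_value K ε δ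
  -- MAIN PART
  rintro _ ⟨t, ht, rfl⟩ xt
  obtain ⟨x, rfl⟩ : ∃ x : ℝ, xt = X1 t * x + X0 := by
    refine ⟨(xt - X0) / X1 t, ?_⟩
    have hX1ne : X1 t ≠ 0 := by
      rw [hX1val t ht]; exact div_ne_zero hKne (hI t ht)
    field_simp; ring
  have hsne : c3 * t + c0 ≠ 0 := hI t ht
  have hs2 : (c3 * t + c0) ^ 2 ≠ 0 := pow_ne_zero 2 hsne
  have hX1ne : X1 t ≠ 0 := by rw [hX1val t ht]; exact div_ne_zero hKne hsne
  have hTmem : T t ∈ T '' I := ⟨t, ht, rfl⟩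
  have hutslice : ContDiff ℝ (⊤ : ℕ∞) (ut (T t)) := by
    rw [← contDiffOn_univ]
    exact hut.comp (contDiff_const.prodMk contDiff_id).contDiffOn
      (fun y _ => ⟨hTmem, mem_univ y⟩)
  have hw1 : Differentiable ℝ (ut (T t)) := hutslice.differentiable (by simp)
  have hw2 : ContDiff ℝ (∞ : WithTop ℕ∞) (deriv (ut (T t))) :=
    (contDiff_infty_iff_deriv.mp (hutslice.of_le (by simp))).2
  have hu1 : Differentiable ℝ (u t) := (huslice t ht).differentiable (by simp)
  have hu2 : ContDiff ℝ (∞ : WithTop ℕ∞) (deriv (u t)) :=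
    (contDiff_infty_iff_deriv.mp ((huslice t ht).of_le (by simp))).2
  have hmem2 : (T t, X1 t * x + X0) ∈ (T '' I) ×ˢ (univ : Set ℝ) :=
    ⟨hTmem, mem_univ _⟩
  have hDut : DifferentiableAt ℝ (fun p : ℝ × ℝ => ut p.1 p.2) (T t, X1 t * x + X0) :=
    (hut.contDiffAt ((hTIopen.prod isOpen_univ).mem_nhds hmem2)).differentiableAt (by simp)
  set L := fderiv ℝ (fun p : ℝ × ℝ => ut p.1 p.2) (T t, X1 t * x + X0) with hLdef
  have hLf : HasFDerivAt (fun p : ℝ × ℝ => ut p.1 p.2) L (T t, X1 t * x + X0) :=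
    hDut.hasFDerivAt
  have hpdtut : pdt ut (T t) (X1 t * x + X0) = L (1, 0) := by
    have h7 := hLf.comp_hasDerivAt (T t)
      ((hasDerivAt_id (T t)).prodMk (hasDerivAt_const (T t) (X1 t * x + X0)))
    have h7' : HasDerivAt (fun σ => ut σ (X1 t * x + X0)) (L (1, 0)) (T t) := by
      exact h7
    exact h7'.deriv
  have hd1ut : deriv (ut (T t)) (X1 t * x + X0) = L (0, 1) := by
    have h7 := hLf.comp_hasDerivAt (X1 t * x + X0)
      ((hasDerivAt_const (X1 t * x + X0) (T t)).prodMk (hasDerivAt_id (X1 t * x + X0)))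
    have h7' : HasDerivAt (fun y => ut (T t) y) (L (0, 1)) (X1 t * x + X0) := by
      exact h7
    exact h7'.deriv
  have hlin : ∀ a b : ℝ, L (a, b) = a * L (1, 0) + b * L (0, 1) := by
    intro a b
    have h8 : ((a, b) : ℝ × ℝ) = a • ((1 : ℝ), (0 : ℝ)) + b • ((0 : ℝ), (1 : ℝ)) := by
      simp [Prod.ext_iff]
    rw [h8, map_add, map_smul, map_smul, smul_eq_mul, smul_eq_mul]
  clear hLdef
  clear_value L
  have hinner : ∀ y : ℝ, HasDerivAt (fun y : ℝ => X1 t * y + X0) (X1 t) y := by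
    intro y
    simpa using ((hasDerivAt_id y).const_mul (X1 t)).add_const X0
  -- first spatial derivative identity
  have e1 : ∀ y : ℝ, deriv (ut (T t)) (X1 t * y + X0) * X1 t
      = X1 t / deriv T t * deriv (u t) y + deriv X1 t / deriv T t := by
    intro y
    have hl : HasDerivAt (fun y => ut (T t) (X1 t * y + X0))
        (deriv (ut (T t)) (X1 t * y + X0) * X1 t) y := by
      have := ((hw1 (X1 t * y + X0)).hasDerivAt).comp y (hinner y)
      simpa [Function.comp_def] using this
    have hr : HasDerivAt
        (fun y => X1 t / deriv T t * u t y + deriv X1 t / deriv T t * y)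
        (X1 t / deriv T t * deriv (u t) y + deriv X1 t / deriv T t) y := by
      have := ((hu1 y).hasDerivAt.const_mul (X1 t / deriv T t)).add
        ((hasDerivAt_id y).const_mul (deriv X1 t / deriv T t))
      rw [mul_one] at this
      exact this
    have hfe : (fun y => ut (T t) (X1 t * y + X0))
        = fun y => X1 t / deriv T t * u t y + deriv X1 t / deriv T t * y :=
      funext (hutdef t ht)
    rw [hfe] at hl
    exact hl.unique hr
  -- second spatial derivative identity
  have e2 : (deriv (deriv (ut (T t))) (X1 t * x + X0) * X1 t) * X1 t
      = X1 t / deriv T t * deriv (deriv (u t)) x := by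
    have hl : HasDerivAt (fun y => deriv (ut (T t)) (X1 t * y + X0) * X1 t)
        ((deriv (deriv (ut (T t))) (X1 t * x + X0) * X1 t) * X1 t) x := by
      have h9 := ((hw2.differentiable (by simp) (X1 t * x + X0)).hasDerivAt).comp x (hinner x)
      have := h9.mul_const (X1 t)
      simpa [Function.comp] using this
    have hr : HasDerivAt
        (fun y => X1 t / deriv T t * deriv (u t) y + deriv X1 t / deriv T t)
        (X1 t / deriv T t * deriv (deriv (u t)) x) x := by
      have := ((hu2.differentiable (by simp) x).hasDerivAt.const_mul
        (X1 t / deriv T t)).add_const (deriv X1 t / deriv T t)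
      simpa using this
    have hfe : (fun y => deriv (ut (T t)) (X1 t * y + X0) * X1 t)
        = fun y => X1 t / deriv T t * deriv (u t) y + deriv X1 t / deriv T t :=
      funext e1
    rw [hfe] at hl
    exact hl.unique hr
  -- time derivative identity
  have hγ : HasDerivAt (fun τ => ((T τ, X1 τ * x + X0) : ℝ × ℝ))
      ((δ / (c3 * t + c0) ^ 2, -(K * c3) / (c3 * t + c0) ^ 2 * x)) t :=
    ((hTs t ht).hasDerivAt).prodMk (((hX1d t ht).mul_const x).add_const X0)
  have hgl : HasDerivAt (fun τ => ut (T τ) (X1 τ * x + X0))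
      (L (δ / (c3 * t + c0) ^ 2, -(K * c3) / (c3 * t + c0) ^ 2 * x)) t :=
    (hLf.comp_hasDerivAt t hγ :)
  have hgr : HasDerivAt (fun τ => K * (c3 * τ + c0) / δ * u τ x + -(K * c3) / δ * x)
      (K * c3 / δ * u t x + K * (c3 * t + c0) / δ * pdt u t x) t := by
    have hf1 : HasDerivAt (fun τ => K * (c3 * τ + c0) / δ) (K * c3 / δ) t := by
      have h10 : HasDerivAt (fun τ => c3 * τ + c0) c3 t := by
        simpa using ((hasDerivAt_id t).const_mul c3).add_const c0
      simpa [mul_comm, mul_div_assoc] using (h10.const_mul K).div_const δ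
    have := (hf1.mul (hud t ht x)).add_const (-(K * c3) / δ * x)
    simpa using this
  have heq3 : (fun τ => ut (T τ) (X1 τ * x + X0)) =ᶠ[nhds t]
      fun τ => K * (c3 * τ + c0) / δ * u τ x + -(K * c3) / δ * x := by
    filter_upwards [hIo.mem_nhds ht] with τ hτ
    rw [hutdef τ hτ x, hX1val τ hτ, hT' τ hτ, hX1' τ hτ]
    have hτne := hI τ hτ
    have hτ2 : (c3 * τ + c0) ^ 2 ≠ 0 := pow_ne_zero 2 hτne
    have hco1 : K / (c3 * τ + c0) / (δ / (c3 * τ + c0) ^ 2) = K * (c3 * τ + c0) / δ := by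
      rw [div_div_div_eq]
      rw [div_eq_div_iff (by exact mul_ne_zero hτne hδ) hδ]
      ring
    have hco2 : -(K * c3) / (c3 * τ + c0) ^ 2 / (δ / (c3 * τ + c0) ^ 2) = -(K * c3) / δ := by
      rw [div_div_div_eq]
      rw [div_eq_div_iff (by exact mul_ne_zero hτ2 hδ) hδ]
      ring
    rw [hco1, hco2]
  have e3 : L (δ / (c3 * t + c0) ^ 2, -(K * c3) / (c3 * t + c0) ^ 2 * x)
      = K * c3 / δ * u t x + K * (c3 * t + c0) / δ * pdt u t x :=
    (hgl.congr_of_eventuallyEq heq3.symm).unique hgr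
  rw [hlin] at e3
  -- rewrite the goal
  have h2d : ∀ f : ℝ → ℝ, iteratedDeriv 2 f = deriv (deriv f) := by
    intro f
    rw [show (2 : ℕ) = 1 + 1 from rfl, iteratedDeriv_succ, iteratedDeriv_one]
  have hq : pdx ut 1 (T t) (X1 t * x + X0) = L (0, 1) := by
    simp only [pdx, iteratedDeriv_one]; exact hd1ut
  have hD2d : pdx ut 2 (T t) (X1 t * x + X0)
      = deriv (deriv (ut (T t))) (X1 t * x + X0) := by
    simp only [pdx, h2d]
  have hVx := hutdef t ht x
  have hueqx : pdt u t x + u t x * deriv (u t) x = a2 * deriv (deriv (u t)) x := by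
    have h11 := hueq t ht x
    simpa only [pdx, iteratedDeriv_one, h2d] using h11
  have e1x := e1 x
  rw [hd1ut] at e1x
  rw [hpdtut, hq, hD2d, hVx]
  simp only [hT' t ht, hX1val t ht, hX1' t ht] at e1x e2 e3 ⊢
  field_simp at e1x e2 e3 ⊢
  refine mul_left_cancel₀ (mul_ne_zero (pow_ne_zero 2 hKne) hδ) ?_
  linear_combination (K ^ 2) * e3
    + (K ^ 3 * (c3 * t + c0) * u t x) * e1x
    + (K ^ 3 * (c3 * t + c0) ^ 3) * hueqx
    + (-(K * δ * c4 * a2)) * e2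
    + (K * (c3 * t + c0) ^ 3 * a2 * deriv (deriv (u t)) x) * hK2
end

section
/- Gauging of the subclass F_{IV,0} with r = 2 to the subclass with b₀ = b₁ = 0 in the case b₁ > 0: let a₂ ≠ 0, b > 0 and b₀ be real. Set T(t) = e^{2bt}, X¹(t) = (2b)^{1/2}e^{bt} and X⁰(t) = 4b₀(2b)^{−3/2}e^{bt}. If u solves u_t + u u_x = a₂u₂ + b²x + b₀ on ℝ², then the function ũ defined by ũ(T(t), X¹(t)x + X⁰(t)) = (X¹/T′)u(t,x) + (X¹′/T′)x + X⁰′/T′, i.e. ũ(e^{2bt}, X¹(t)x + X⁰(t)) = (2b)^{−1/2}e^{−bt}u(t,x) + ((2b)^{1/2}/2)e^{−bt}x + 2b₀(2b)^{−3/2}e^{−bt}, solves ũ_t + ũ ũ_x = a₂ũ₂ on (0,∞) × ℝ. -/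
open Real Set

/-- The core algebraic computation for the gauging. -/
lemma stmt19_alg (a2 b b0 c E x U Ut Ux Uxx P Q R V : ℝ) (hb : 0 < b) (hc : 0 < c) (hE : 0 < E)
    (hc2 : c^2 = 2*b)
    (h0 : V = c*E/(2*b*E^2) * U + b*(c*E)/(2*b*E^2) * x + b*(4*b0/c^3*E)/(2*b*E^2))
    (hA : Q * (c*E*1) = c*E/(2*b*E^2) * Ux + b*(c*E)/(2*b*E^2) * 1)
    (hB : R * (c*E*1) * (c*E*1) = c*E/(2*b*E^2) * Uxx)
    (hC : 2*b*E^2 * P + (b*(c*E)*x + b*(4*b0/c^3*E)) * Q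
        = c/(2*b) * (-b*E⁻¹) * U + c/(2*b)*E⁻¹ * Ut + c/2 * (-b*E⁻¹) * x + 2*b0/c^3 * (-b*E⁻¹))
    (hueq : Ut + U*Ux = a2*Uxx + b^2*x + b0) :
    P + V*Q = a2*R := by
  have hbne : b ≠ 0 := ne_of_gt hb
  have hcne : c ≠ 0 := ne_of_gt hc
  have hEne : E ≠ 0 := ne_of_gt hE
  have hcE : c*E*1 ≠ 0 := by simp [hcne, hEne]
  have hQ : Q = (Ux + b)/(2*b*E^2) := by
    refine mul_right_cancel₀ hcE (hA.trans ?_)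
    field_simp
  have hR : R = Uxx/(2*b*c*E^3) := by
    refine mul_right_cancel₀ hcE (mul_right_cancel₀ hcE (hB.trans ?_))
    field_simp
  have hUt : Ut = a2*Uxx + b^2*x + b0 - U*Ux := by linarith
  have hP : P = (c/(2*b) * (-b*E⁻¹) * U + c/(2*b)*E⁻¹ * Ut + c/2 * (-b*E⁻¹) * x
      + 2*b0/c^3 * (-b*E⁻¹) - (b*(c*E)*x + b*(4*b0/c^3*E)) * Q) / (2*b*E^2) := by
    rw [eq_div_iff (by positivity : 2*b*E^2 ≠ 0)]
    linarith [hC]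
  rw [hP, h0, hQ, hR, hUt]
  rw [show b = c^2/2 by linarith]
  field_simp
  ring

theorem stmt19 (a2 : ℝ) (ha2 : a2 ≠ 0) (b b0 : ℝ) (hb : 0 < b)
    (T X1 X0 : ℝ → ℝ)
    (hTdef : ∀ t : ℝ, T t = Real.exp (2 * b * t))
    (hX1def : ∀ t : ℝ, X1 t = (2 * b) ^ ((1 : ℝ) / 2) * Real.exp (b * t))
    (hX0def : ∀ t : ℝ, X0 t = 4 * b0 * (2 * b) ^ (-(3 / 2) : ℝ) * Real.exp (b * t))
    (u : ℝ → ℝ → ℝ) (hu : ContDiff ℝ (⊤ : ℕ∞) (fun p : ℝ × ℝ => u p.1 p.2))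
    (hueq : ∀ t x : ℝ,
      pdt u t x + u t x * pdx u 1 t x = a2 * pdx u 2 t x + b ^ 2 * x + b0)
    (ut : ℝ → ℝ → ℝ)
    (hut : ContDiffOn ℝ (⊤ : ℕ∞) (fun p : ℝ × ℝ => ut p.1 p.2) (Ioi (0 : ℝ) ×ˢ (univ : Set ℝ)))
    (hutdef : ∀ t x : ℝ,
      ut (T t) (X1 t * x + X0 t)
        = X1 t / deriv T t * u t x + deriv X1 t / deriv T t * x
          + deriv X0 t / deriv T t) :
    ∀ tt ∈ Ioi (0 : ℝ), ∀ xt : ℝ,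
      pdt ut tt xt + ut tt xt * pdx ut 1 tt xt = a2 * pdx ut 2 tt xt := by
  have h2b : (0:ℝ) < 2*b := by linarith
  have hbne : b ≠ 0 := ne_of_gt hb
  -- the constant c = (2b)^{1/2}
  obtain ⟨c, hcpos, hc2, hcdef⟩ : ∃ c : ℝ, 0 < c ∧ c^2 = 2*b ∧ c = (2*b) ^ ((1:ℝ)/2) := by
    refine ⟨(2*b) ^ ((1:ℝ)/2), Real.rpow_pos_of_pos h2b _, ?_, rfl⟩
    rw [← Real.rpow_natCast ((2*b) ^ ((1:ℝ)/2)) 2, ← Real.rpow_mul h2b.le]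
    norm_num
  have hcne : c ≠ 0 := ne_of_gt hcpos
  have hc3 : (2*b) ^ (-(3/2) : ℝ) = (c^3)⁻¹ := by
    rw [hcdef, ← Real.rpow_natCast ((2*b) ^ ((1:ℝ)/2)) 3, ← Real.rpow_mul h2b.le,
      ← Real.rpow_neg h2b.le]
    norm_num
  -- rewritten forms of T, X1, X0
  have hX1 : ∀ t, X1 t = c * Real.exp (b*t) := by
    intro t; rw [hX1def, hcdef]
  have hX0 : ∀ t, X0 t = 4*b0/c^3 * Real.exp (b*t) := by
    intro t; rw [hX0def, hc3]; ring
  have hT2 : ∀ t, T t = Real.exp (b*t)^2 := by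
    intro t; rw [hTdef, sq, ← Real.exp_add]; ring_nf
  have hTpos : ∀ t, 0 < T t := fun t => by rw [hTdef]; exact Real.exp_pos _
  -- derivatives of T, X1, X0
  have hTd : ∀ t, HasDerivAt T (2*b*T t) t := by
    intro t
    have h : HasDerivAt (fun s => Real.exp (2*b*s)) (Real.exp (2*b*id t) * (2*b*1)) t :=
      ((hasDerivAt_id t).const_mul (2*b)).exp
    have hfun : T = fun s => Real.exp (2*b*s) := funext hTdef
    rw [hfun]; convert h using 1; simp; ring
  have hX1d : ∀ t, HasDerivAt X1 (b*X1 t) t := by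
    intro t
    have h : HasDerivAt (fun s => c * Real.exp (b*s)) (c * (Real.exp (b*id t) * (b*1))) t :=
      (((hasDerivAt_id t).const_mul b).exp).const_mul c
    have hfun : X1 = fun s => c * Real.exp (b*s) := funext hX1
    rw [hfun]; convert h using 1; simp; ring
  have hX0d : ∀ t, HasDerivAt X0 (b*X0 t) t := by
    intro t
    have h : HasDerivAt (fun s => 4*b0/c^3 * Real.exp (b*s))
        (4*b0/c^3 * (Real.exp (b*id t) * (b*1))) t :=
      (((hasDerivAt_id t).const_mul b).exp).const_mul (4*b0/c^3)
    have hfun : X0 = fun s => 4*b0/c^3 * Real.exp (b*s) := funext hX0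
    rw [hfun]; convert h using 1; simp; ring
  have hT' : ∀ t, deriv T t = 2*b*T t := fun t => (hTd t).deriv
  have hX1' : ∀ t, deriv X1 t = b*X1 t := fun t => (hX1d t).deriv
  have hX0' : ∀ t, deriv X0 t = b*X0 t := fun t => (hX0d t).deriv
  -- facts about u
  have hud : Differentiable ℝ (fun p : ℝ × ℝ => u p.1 p.2) := hu.differentiable (by simp)
  have hu_t : ∀ t x, HasDerivAt (fun s => u s x) (pdt u t x) t := by
    intro t x
    exact ((hud.comp (differentiable_id.prodMk (differentiable_const x))) t).hasDerivAt
  have hucd : ∀ t, ContDiff ℝ ((⊤:ℕ∞):WithTop ℕ∞) (u t) := by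
    intro t
    exact (hu.of_le (by simp)).comp (contDiff_const.prodMk contDiff_id)
  have hu_x : ∀ t x, HasDerivAt (u t) (pdx u 1 t x) x := by
    intro t x
    have h : pdx u 1 t x = deriv (u t) x := by simp [pdx, iteratedDeriv_one]
    rw [h]
    exact (((hucd t).differentiable (by simp)) x).hasDerivAt
  have hu_xx : ∀ t x, HasDerivAt (fun y => pdx u 1 t y) (pdx u 2 t x) x := by
    intro t x
    have hdc : ContDiff ℝ ((⊤:ℕ∞):WithTop ℕ∞) (deriv (u t)) := by
      have := (hucd t).iterate_deriv 1
      rwa [Function.iterate_one] at this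
    have h1 : (fun y => pdx u 1 t y) = deriv (u t) := by
      funext y; simp [pdx, iteratedDeriv_one]
    have h2 : pdx u 2 t x = deriv (deriv (u t)) x := by
      simp [pdx, iteratedDeriv_succ, iteratedDeriv_one]
    rw [h1, h2]
    exact ((hdc.differentiable (by simp)) x).hasDerivAt
  -- facts about ut
  have hop : IsOpen (Ioi (0:ℝ) ×ˢ (univ : Set ℝ)) := isOpen_Ioi.prod isOpen_univ
  have hutcd : ∀ tt, 0 < tt → ContDiff ℝ ((⊤:ℕ∞):WithTop ℕ∞) (ut tt) := by
    intro tt htt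
    have h1 : ContDiffOn ℝ ((⊤:ℕ∞):WithTop ℕ∞)
        ((fun p : ℝ × ℝ => ut p.1 p.2) ∘ (fun x : ℝ => (tt, x))) univ :=
      (hut.of_le (by simp)).comp (contDiff_const.prodMk contDiff_id).contDiffOn
        (fun x _ => ⟨htt, mem_univ _⟩)
    rw [contDiffOn_univ] at h1
    exact h1
  have hut_x : ∀ tt, 0 < tt → ∀ y, HasDerivAt (ut tt) (pdx ut 1 tt y) y := by
    intro tt htt y
    have h : pdx ut 1 tt y = deriv (ut tt) y := by simp [pdx, iteratedDeriv_one]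
    rw [h]
    exact (((hutcd tt htt).differentiable (by simp)) y).hasDerivAt
  have hut_xx : ∀ tt, 0 < tt → ∀ y, HasDerivAt (fun w => pdx ut 1 tt w) (pdx ut 2 tt y) y := by
    intro tt htt y
    have hdc : ContDiff ℝ ((⊤:ℕ∞):WithTop ℕ∞) (deriv (ut tt)) := by
      have := (hutcd tt htt).iterate_deriv 1
      rwa [Function.iterate_one] at this
    have h1 : (fun w => pdx ut 1 tt w) = deriv (ut tt) := by
      funext w; simp [pdx, iteratedDeriv_one]
    have h2 : pdx ut 2 tt y = deriv (deriv (ut tt)) y := by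
      simp [pdx, iteratedDeriv_succ, iteratedDeriv_one]
    rw [h1, h2]
    exact ((hdc.differentiable (by simp)) y).hasDerivAt
  have hFd : ∀ tt, 0 < tt → ∀ y, DifferentiableAt ℝ (fun p : ℝ × ℝ => ut p.1 p.2) (tt, y) := by
    intro tt htt y
    exact (hut.differentiableOn (by simp)).differentiableAt (hop.mem_nhds ⟨htt, mem_univ _⟩)
  have hfder : ∀ tt, 0 < tt → ∀ y, ∀ a cc : ℝ,
      fderiv ℝ (fun p : ℝ × ℝ => ut p.1 p.2) (tt, y) (a, cc)
        = a * pdt ut tt y + cc * pdx ut 1 tt y := by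
    intro tt htt y a cc
    have hF := hFd tt htt y
    have h10 : HasDerivAt (fun s => ut s y)
        (fderiv ℝ (fun p : ℝ × ℝ => ut p.1 p.2) (tt, y) (1, 0)) tt :=
      hF.hasFDerivAt.comp_hasDerivAt (l := fun p : ℝ × ℝ => ut p.1 p.2) tt ((hasDerivAt_id tt).prodMk (hasDerivAt_const tt y))
    have h01 : HasDerivAt (fun w => ut tt w)
        (fderiv ℝ (fun p : ℝ × ℝ => ut p.1 p.2) (tt, y) (0, 1)) y :=
      hF.hasFDerivAt.comp_hasDerivAt (l := fun p : ℝ × ℝ => ut p.1 p.2) y ((hasDerivAt_const y tt).prodMk (hasDerivAt_id y))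
    have hsplit : ((a, cc) : ℝ × ℝ) = a • ((1:ℝ), (0:ℝ)) + cc • ((0:ℝ), (1:ℝ)) := by
      simp [Prod.ext_iff]
    rw [hsplit, map_add, map_smul, map_smul, smul_eq_mul, smul_eq_mul]
    have e1 : pdt ut tt y = fderiv ℝ (fun p : ℝ × ℝ => ut p.1 p.2) (tt, y) (1, 0) := by
      simp only [pdt]; exact h10.deriv
    have e2 : pdx ut 1 tt y = fderiv ℝ (fun p : ℝ × ℝ => ut p.1 p.2) (tt, y) (0, 1) := by
      simp only [pdx, iteratedDeriv_one]; exact h01.deriv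
    rw [e1, e2]
  -- the key claim at points of the form (T t, X1 t * x + X0 t)
  have key : ∀ t x : ℝ,
      pdt ut (T t) (X1 t * x + X0 t)
        + ut (T t) (X1 t * x + X0 t) * pdx ut 1 (T t) (X1 t * x + X0 t)
        = a2 * pdx ut 2 (T t) (X1 t * x + X0 t) := by
    intro t x
    set y := X1 t * x + X0 t with hy
    have hTt := hTpos t
    -- equation (A) : first spatial derivative, for all x
    have hA : ∀ w, pdx ut 1 (T t) (X1 t * w + X0 t) * (X1 t * 1)
        = X1 t / deriv T t * pdx u 1 t w + deriv X1 t / deriv T t * 1 := by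
      intro w
      have hL : HasDerivAt (fun v => ut (T t) (X1 t * v + X0 t))
          (pdx ut 1 (T t) (X1 t * w + X0 t) * (X1 t * 1)) w :=
        (hut_x (T t) hTt (X1 t * w + X0 t)).comp w
          (((hasDerivAt_id w).const_mul (X1 t)).add_const (X0 t))
      have hR : HasDerivAt (fun v => X1 t / deriv T t * u t v + deriv X1 t / deriv T t * v
          + deriv X0 t / deriv T t)
          (X1 t / deriv T t * pdx u 1 t w + deriv X1 t / deriv T t * 1) w :=
        (((hu_x t w).const_mul _).add ((hasDerivAt_id w).const_mul _)).add_const _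
      have hfe : (fun v => ut (T t) (X1 t * v + X0 t))
          = fun v => X1 t / deriv T t * u t v + deriv X1 t / deriv T t * v
            + deriv X0 t / deriv T t := funext (fun v => hutdef t v)
      have hR' : HasDerivAt (fun v => ut (T t) (X1 t * v + X0 t))
          (X1 t / deriv T t * pdx u 1 t w + deriv X1 t / deriv T t * 1) w := by
        rw [hfe]; exact hR
      exact hL.unique hR'
    -- equation (B) : second spatial derivative
    have hB : pdx ut 2 (T t) y * (X1 t * 1) * (X1 t * 1)
        = X1 t / deriv T t * pdx u 2 t x := by
      have hL : HasDerivAt (fun w => pdx ut 1 (T t) (X1 t * w + X0 t) * (X1 t * 1))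
          (pdx ut 2 (T t) y * (X1 t * 1) * (X1 t * 1)) x :=
        (((hut_xx (T t) hTt y).comp x
          (((hasDerivAt_id x).const_mul (X1 t)).add_const (X0 t))).mul_const (X1 t * 1))
      have hR : HasDerivAt (fun w => X1 t / deriv T t * pdx u 1 t w + deriv X1 t / deriv T t * 1)
          (X1 t / deriv T t * pdx u 2 t x) x :=
        ((hu_xx t x).const_mul _).add_const _
      have hfe : (fun w => pdx ut 1 (T t) (X1 t * w + X0 t) * (X1 t * 1))
          = fun w => X1 t / deriv T t * pdx u 1 t w + deriv X1 t / deriv T t * 1 :=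
        funext hA
      have hR' : HasDerivAt (fun w => pdx ut 1 (T t) (X1 t * w + X0 t) * (X1 t * 1))
          (X1 t / deriv T t * pdx u 2 t x) x := by
        rw [hfe]; exact hR
      exact hL.unique hR'
    -- equation (C) : time derivative
    have hexpneg : HasDerivAt (fun s => Real.exp (-(b*s))) (-b * Real.exp (-(b*t))) t := by
      have h1 : HasDerivAt (fun s : ℝ => -(b*s)) (-(b*1)) t :=
        ((hasDerivAt_id t).const_mul b).neg
      have h : HasDerivAt (fun s => Real.exp (-(b*s))) (Real.exp (-(b*t)) * (-(b*1))) t := h1.exp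
      convert h using 1; ring
    have hC : 2*b*T t * pdt ut (T t) y + (b*X1 t*x + b*X0 t) * pdx ut 1 (T t) y
        = c/(2*b) * (-b*Real.exp (-(b*t))) * u t x + c/(2*b)*Real.exp (-(b*t)) * pdt u t x
          + c/2 * (-b*Real.exp (-(b*t))) * x + 2*b0/c^3 * (-b*Real.exp (-(b*t))) := by
      have hγ : HasDerivAt (fun s => (T s, X1 s * x + X0 s))
          ((2*b*T t, b*X1 t*x + b*X0 t) : ℝ × ℝ) t :=
        (hTd t).prodMk (((hX1d t).mul_const x).add (hX0d t))
      have hLC : HasDerivAt (fun s => ut (T s) (X1 s * x + X0 s))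
          (fderiv ℝ (fun p : ℝ × ℝ => ut p.1 p.2) (T t, y) (2*b*T t, b*X1 t*x + b*X0 t)) t :=
        (hFd (T t) hTt y).hasFDerivAt.comp_hasDerivAt (l := fun p : ℝ × ℝ => ut p.1 p.2) t hγ
      rw [hfder (T t) hTt y] at hLC
      have hRC : HasDerivAt (fun s => c/(2*b) * Real.exp (-(b*s)) * u s x
          + c/2 * Real.exp (-(b*s)) * x + 2*b0/c^3 * Real.exp (-(b*s)))
          (c/(2*b) * (-b*Real.exp (-(b*t))) * u t x + c/(2*b)*Real.exp (-(b*t)) * pdt u t x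
            + c/2 * (-b*Real.exp (-(b*t))) * x + 2*b0/c^3 * (-b*Real.exp (-(b*t)))) t := by
        have p1 : HasDerivAt (fun s => c/(2*b) * Real.exp (-(b*s)) * u s x)
            (c/(2*b) * (-b*Real.exp (-(b*t))) * u t x
              + c/(2*b) * Real.exp (-(b*t)) * pdt u t x) t :=
          (hexpneg.const_mul (c/(2*b))).mul (hu_t t x)
        have p2 : HasDerivAt (fun s => c/2 * Real.exp (-(b*s)) * x)
            (c/2 * (-b*Real.exp (-(b*t))) * x) t :=
          (hexpneg.const_mul (c/2)).mul_const x
        have p3 : HasDerivAt (fun s => 2*b0/c^3 * Real.exp (-(b*s)))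
            (2*b0/c^3 * (-b*Real.exp (-(b*t)))) t := hexpneg.const_mul _
        exact (p1.add p2).add p3
      have hfe : (fun s => ut (T s) (X1 s * x + X0 s))
          = fun s => c/(2*b) * Real.exp (-(b*s)) * u s x
            + c/2 * Real.exp (-(b*s)) * x + 2*b0/c^3 * Real.exp (-(b*s)) := by
        funext s
        rw [hutdef s x, hT' s, hX1' s, hX0' s, hX1 s, hX0 s, hTdef s, Real.exp_neg,
          show Real.exp (2*b*s) = Real.exp (b*s)^2 by rw [sq, ← Real.exp_add]; ring_nf]
        have hEs : Real.exp (b*s) ≠ 0 := Real.exp_ne_zero _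
        field_simp
        ring
      have hRC' : HasDerivAt (fun s => ut (T s) (X1 s * x + X0 s))
          (c/(2*b) * (-b*Real.exp (-(b*t))) * u t x + c/(2*b)*Real.exp (-(b*t)) * pdt u t x
            + c/2 * (-b*Real.exp (-(b*t))) * x + 2*b0/c^3 * (-b*Real.exp (-(b*t)))) t := by
        rw [hfe]; exact hRC
      exact hLC.unique hRC'
    -- assemble via the algebra lemma
    have h0 := hutdef t x
    have hAx := hA x
    rw [← hy] at h0 hAx
    set V := ut (T t) y with hV
    set P := pdt ut (T t) y with hPd
    set Q := pdx ut 1 (T t) y with hQd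
    set R := pdx ut 2 (T t) y with hRd
    rw [hT' t, hX1' t, hX0' t, hX1 t, hX0 t, hT2 t] at h0
    rw [hT' t, hX1' t, hX1 t, hT2 t] at hAx
    rw [hT' t, hX1 t, hT2 t] at hB
    rw [hX1 t, hX0 t, hT2 t, Real.exp_neg] at hC
    exact stmt19_alg a2 b b0 c (Real.exp (b*t)) x (u t x) (pdt u t x) (pdx u 1 t x)
      (pdx u 2 t x) P Q R V hb hcpos (Real.exp_pos _) hc2 h0 hAx hB hC (hueq t x)
  -- conclude by surjectivity of (t, x) ↦ (T t, X1 t x + X0 t)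
  intro tt htt xt
  rw [mem_Ioi] at htt
  set t := Real.log tt / (2*b) with ht
  have hTt : T t = tt := by
    rw [hTdef, ht, show 2*b*(Real.log tt/(2*b)) = Real.log tt by field_simp]
    exact Real.exp_log htt
  have hX1ne : X1 t ≠ 0 := by
    rw [hX1]; positivity
  have hx : X1 t * ((xt - X0 t)/X1 t) + X0 t = xt := by
    field_simp
    ring
  have := key t ((xt - X0 t)/X1 t)
  rw [hx, hTt] at this
  exact this
end
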